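/- arXiv:1601.02527 — 4 statements merged into one kernel-verified Lean document; each statement's English description precedes it below -/
import Mathlib

section
/- Let (p_n)_{n≥1} ⊆ [1,∞) and (σ_n)_{n≥1} ⊆ (0,∞) with σ_n → ∞, assume dom f ≠ ∅ where f(x) := Σ_{n≥1} p_n e^{σ_n x}, and let α ∈ [0,∞) satisfy (−∞,−α) ⊆ dom f ⊆ (−∞,−α]. Define h_FD(x,y) := Σ_{n≥1} p_n ln(1+e^{x+σ_n y}). Then: (i) h_FD is differentiable at every (x,y) ∈ int(dom h_FD) = ℝ × (−∞,−α), with ∇h_FD(x,y) = Σ_{n≥1} p_n (e^{x+σ_n y}/(1+e^{x+σ_n y}))·(1,σ_n). (ii) If −α ∈ dom f and x ∈ ℝ, then ∂h_FD(x,−α) ≠ ∅ iff Σ_{n≥1} p_n σ_n e^{x−σ_n α} < ∞ iff the series Σ_{n≥1} p_n (e^{x−σ_n α}/(1+e^{x−σ_n α}))·(1,σ_n) converges in ℝ²; and if (ū,v̄) denotes its sum, then ∂h_FD(x,−α) = {ū} × [v̄,∞). -/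
open Filter
open scoped ENNReal

/-- The real-valued sum `f(x) = Σ_{n} p_n e^{σ_n x}` (junk value when not summable). -/
noncomputable def fR (p σ : ℕ → ℝ) (x : ℝ) : ℝ := ∑' n, p n * Real.exp (σ n * x)

/-- The effective domain of `f`: the set of `x` where the series `Σ p_n e^{σ_n x}` converges. -/
def fDom (p σ : ℕ → ℝ) : Set ℝ := {x : ℝ | Summable fun n => p n * Real.exp (σ n * x)}

/-- The term-by-term derivative `f'(x) = Σ_n p_n σ_n e^{σ_n x}` (junk value when not summable). -/
noncomputable def fD (p σ : ℕ → ℝ) (x : ℝ) : ℝ := ∑' n, p n * σ n * Real.exp (σ n * x)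

/-- `γ := Σ_n p_n σ_n e^{−σ_n α} ∈ (0,+∞]`, as an extended real. -/
noncomputable def gammaE (p σ : ℕ → ℝ) (α : ℝ) : EReal :=
  ((∑' n, ENNReal.ofReal (p n * σ n * Real.exp (σ n * (-α))) : ℝ≥0∞) : EReal)

/-- `h_FD(x,y) = Σ_n p_n ln(1+e^{x+σ_n y}) ∈ (0,+∞]`. -/
noncomputable def hFDe (p σ : ℕ → ℝ) (z : ℝ × ℝ) : ℝ≥0∞ :=
  ∑' n, ENNReal.ofReal (p n * Real.log (1 + Real.exp (z.1 + σ n * z.2)))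

/-- The real-valued version of `h_FD` (junk value when not summable). -/
noncomputable def hFDR (p σ : ℕ → ℝ) (z : ℝ × ℝ) : ℝ :=
  ∑' n, p n * Real.log (1 + Real.exp (z.1 + σ n * z.2))

/-- The subdifferential of a function `g : ℝ² → ℝ ∪ {±∞}` at a point `z`. -/
def subd2 (g : ℝ × ℝ → EReal) (z : ℝ × ℝ) : Set (ℝ × ℝ) :=
  {w : ℝ × ℝ | ∀ z' : ℝ × ℝ,
    g z + ((w.1 * (z'.1 - z.1) + w.2 * (z'.2 - z.2) : ℝ) : EReal) ≤ g z'}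

/-- The continuous linear map `ℝ² → ℝ` given by the pair `(a,b)`, i.e. the candidate
(Fréchet) derivative with gradient `(a,b)`. -/
noncomputable def gradCLM (a b : ℝ) : (ℝ × ℝ) →L[ℝ] ℝ :=
  a • ContinuousLinearMap.fst ℝ ℝ ℝ + b • ContinuousLinearMap.snd ℝ ℝ ℝ

/-!
Write `h_FD(x, y) = ∑ pₙ φ(x + σₙ y)` with `φ = softplus`, whose derivative is the sigmoid `φ'`.
For `t` bounded above, `φ(t)`, `φ'(t)` and `eᵗ` are comparable, and `pₙ ≥ 1` forces the exponents
of a convergent series `∑ pₙ φ(tₙ)` to be bounded above; hence `h_FD` is finite exactly on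
`ℝ × dom f`. For `y < y'` in `dom f` the termwise gradients near `(x, y)` are dominated by
`pₙ (1 + σₙ) e^{x + 1 + σₙ y'}`, so the series can be differentiated termwise.
At a boundary point `(x, -α)` the tangent inequalities of the convex `φ` add up to the subgradient
inequality as soon as `∑ pₙ σₙ φ'(x - σₙ α)` converges. Conversely, for a subgradient `w`, `w.1` is
the partial derivative in the (unconstrained) first variable, and comparing `(x, -α)` with the
points `(x, y')`, `y' < -α`, bounds every partial sum of `∑ pₙ σₙ φ'(x - σₙ α)` by `w.2`.
-/

open Set Real
open scoped Topology

noncomputable def softplus (t : ℝ) : ℝ := log (1 + exp t)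

lemma exp_softplus (t : ℝ) : exp (softplus t) = 1 + exp t := exp_log (by positivity)

lemma softplus_pos (t : ℝ) : 0 < softplus t := log_pos (by linarith [exp_pos t])

lemma lt_softplus (t : ℝ) : t < softplus t := by
  rw [← exp_lt_exp, exp_softplus]
  linarith

lemma softplus_le_exp (t : ℝ) : softplus t ≤ exp t := by
  unfold softplus
  linarith [log_le_sub_one_of_pos (show 0 < 1 + exp t by positivity)]

lemma softplus_monotone : Monotone softplus := fun _ _ hab =>
  log_le_log (by positivity) (by gcongr)

lemma sigmoid_eq_exp_div (t : ℝ) : sigmoid t = exp t / (1 + exp t) := by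
  rw [sigmoid_def, exp_neg]
  field_simp
  ring

lemma sigmoid_le_softplus (t : ℝ) : sigmoid t ≤ softplus t :=
  calc sigmoid t = 1 - (1 + exp t)⁻¹ := by rw [sigmoid_eq_exp_div]; field_simp; ring
    _ ≤ softplus t := one_sub_inv_le_log_of_pos (by positivity)

lemma sigmoid_le_exp (t : ℝ) : sigmoid t ≤ exp t :=
  (sigmoid_le_softplus t).trans (softplus_le_exp t)

lemma exp_le_mul_sigmoid {t M : ℝ} (h : t ≤ M) : exp t ≤ (1 + exp M) * sigmoid t := by
  rw [sigmoid_eq_exp_div, mul_div_assoc', le_div_iff₀ (by positivity), mul_comm]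
  gcongr

lemma hasDerivAt_softplus (t : ℝ) : HasDerivAt softplus (sigmoid t) t := by
  have h := ((hasDerivAt_exp t).const_add 1).log (by positivity)
  rwa [← sigmoid_eq_exp_div] at h

lemma differentiable_softplus : Differentiable ℝ softplus :=
  fun t => (hasDerivAt_softplus t).differentiableAt

lemma deriv_softplus : deriv softplus = sigmoid :=
  funext fun t => (hasDerivAt_softplus t).deriv

lemma sigmoid_mul_sub_le (a b : ℝ) : sigmoid a * (b - a) ≤ softplus b - softplus a := by
  have hc := differentiable_softplus.continuous
  have hd {s : Set ℝ} := differentiable_softplus.differentiableOn (s := s)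
  rcases le_total a b with hab | hba
  · refine (convex_Ici a).mul_sub_le_image_sub_of_le_deriv hc.continuousOn hd (fun t ht => ?_)
      a self_mem_Ici b hab hab
    rw [interior_Ici] at ht
    rw [deriv_softplus]
    exact sigmoid_le ht.le
  · have hderiv : ∀ t ∈ interior (Iic a), deriv softplus t ≤ sigmoid a := fun t ht => by
      rw [interior_Iic] at ht
      rw [deriv_softplus]
      exact sigmoid_le ht.le
    have h := (convex_Iic a).image_sub_le_mul_sub_of_deriv_le hc.continuousOn hd hderiv
      b hba a self_mem_Iic hba
    linarith

section Summability

variable {c t : ℕ → ℝ}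

lemma summable_mul_sigmoid_of_exp (hc : ∀ n, 0 ≤ c n)
    (h : Summable fun n => c n * exp (t n)) : Summable fun n => c n * sigmoid (t n) :=
  h.of_nonneg_of_le (fun n => mul_nonneg (hc n) (sigmoid_nonneg _))
    fun n => mul_le_mul_of_nonneg_left (sigmoid_le_exp _) (hc n)

lemma summable_mul_softplus_of_exp (hc : ∀ n, 0 ≤ c n)
    (h : Summable fun n => c n * exp (t n)) : Summable fun n => c n * softplus (t n) :=
  h.of_nonneg_of_le (fun n => mul_nonneg (hc n) (softplus_pos _).le)
    fun n => mul_le_mul_of_nonneg_left (softplus_le_exp _) (hc n)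

lemma summable_mul_exp_of_sigmoid (hc : ∀ n, 0 ≤ c n) {M : ℝ} (ht : ∀ n, t n ≤ M)
    (h : Summable fun n => c n * sigmoid (t n)) : Summable fun n => c n * exp (t n) :=
  (h.mul_left (1 + exp M)).of_nonneg_of_le (fun n => mul_nonneg (hc n) (exp_pos _).le)
    fun n => by
      rw [mul_left_comm]
      exact mul_le_mul_of_nonneg_left (exp_le_mul_sigmoid (ht n)) (hc n)

end Summability

lemma norm_gradCLM_le (a b : ℝ) : ‖gradCLM a b‖ ≤ |a| + |b| := by
  refine ContinuousLinearMap.opNorm_le_bound _ (by positivity) fun v => ?_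
  calc ‖gradCLM a b v‖ = |a * v.1 + b * v.2| := by simp [gradCLM]
    _ ≤ |a| * |v.1| + |b| * |v.2| := by
        rw [← abs_mul, ← abs_mul]
        exact abs_add_le _ _
    _ ≤ |a| * ‖v‖ + |b| * ‖v‖ := by gcongr <;> [exact norm_fst_le v; exact norm_snd_le v]
    _ = (|a| + |b|) * ‖v‖ := by ring

lemma tsum_gradCLM {a b : ℕ → ℝ} (ha : Summable a) (hb : Summable b) :
    ∑' n, gradCLM (a n) (b n) = gradCLM (∑' n, a n) (∑' n, b n) :=
  ((ha.hasSum.smul_const _).add (hb.hasSum.smul_const _)).tsum_eq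

lemma hasFDerivAt_mul_softplus (c s : ℝ) (z : ℝ × ℝ) :
    HasFDerivAt (fun z : ℝ × ℝ => c * softplus (z.1 + s * z.2))
      (gradCLM (c * sigmoid (z.1 + s * z.2)) (c * s * sigmoid (z.1 + s * z.2))) z := by
  have hl : HasFDerivAt (fun z : ℝ × ℝ => z.1 + s * z.2)
      (ContinuousLinearMap.fst ℝ ℝ ℝ + s • ContinuousLinearMap.snd ℝ ℝ ℝ) z :=
    hasFDerivAt_fst.add (hasFDerivAt_snd.const_mul s)
  refine (((hasDerivAt_softplus _).comp_hasFDerivAt z hl).const_mul c).congr_fderiv ?_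
  ext
  · simp [gradCLM]
  · simp [gradCLM]
    ring

lemma tendsto_sum_range_prodMk_iff {f g : ℕ → ℝ} (hf : ∀ n, 0 ≤ f n) (hg : ∀ n, 0 ≤ g n)
    {u v : ℝ} :
    Tendsto (fun N => ∑ k ∈ Finset.range N, (f k, g k)) atTop (𝓝 (u, v)) ↔
      HasSum f u ∧ HasSum g v := by
  simp only [nhds_prod_eq, tendsto_prod_iff', Prod.fst_sum, Prod.snd_sum,
    hasSum_iff_tendsto_nat_of_nonneg hf, hasSum_iff_tendsto_nat_of_nonneg hg]

section

variable {p σ : ℕ → ℝ}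

lemma mem_fDom_iff_summable_mul_exp_add (x y : ℝ) :
    y ∈ fDom p σ ↔ Summable fun n => p n * exp (x + σ n * y) := by
  change (Summable fun n => p n * exp (σ n * y)) ↔ _
  simp only [exp_add, mul_left_comm (p _) (exp x)]
  exact (summable_mul_left_iff (exp_pos x).ne').symm

lemma mem_fDom_of_le (hp0 : ∀ n, 0 ≤ p n) (hσ : ∀ n, 0 ≤ σ n) {y y' : ℝ}
    (hy' : y' ∈ fDom p σ) (h : y ≤ y') : y ∈ fDom p σ :=
  Summable.of_nonneg_of_le (fun n => mul_nonneg (hp0 n) (exp_pos _).le)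
    (fun n => mul_le_mul_of_nonneg_left (exp_le_exp.2 (mul_le_mul_of_nonneg_left h (hσ n)))
      (hp0 n)) hy'

/-- The weight `σ n` costs only a strict decrease of the exponent: `σ ε ≤ e^{σ ε}` with
`ε = y' - y`. -/
lemma summable_mul_mul_exp_add (hp0 : ∀ n, 0 ≤ p n) (hσ : ∀ n, 0 ≤ σ n) {y y' : ℝ}
    (hy' : y' ∈ fDom p σ) (h : y < y') (x : ℝ) :
    Summable fun n => p n * σ n * exp (x + σ n * y) := by
  have hε : 0 < y' - y := sub_pos.2 h
  refine (((mem_fDom_iff_summable_mul_exp_add x y').1 hy').mul_left (y' - y)⁻¹).of_nonneg_of_le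
    (fun n => mul_nonneg (mul_nonneg (hp0 n) (hσ n)) (exp_pos _).le) fun n => ?_
  have hexp : exp (x + σ n * y') = exp (σ n * (y' - y)) * exp (x + σ n * y) := by
    rw [← exp_add]
    ring_nf
  have hσε : σ n * (y' - y) ≤ exp (σ n * (y' - y)) := by
    linarith [add_one_le_exp (σ n * (y' - y))]
  calc p n * σ n * exp (x + σ n * y)
      = (y' - y)⁻¹ * (p n * (σ n * (y' - y) * exp (x + σ n * y))) := by field_simp
    _ ≤ (y' - y)⁻¹ * (p n * exp (x + σ n * y')) := by
        rw [hexp]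
        gcongr
        exact hp0 n

lemma summable_mul_softplus (hp0 : ∀ n, 0 ≤ p n) {y : ℝ} (hy : y ∈ fDom p σ) (x : ℝ) :
    Summable fun n => p n * softplus (x + σ n * y) :=
  summable_mul_softplus_of_exp hp0 ((mem_fDom_iff_summable_mul_exp_add x y).1 hy)

lemma summable_mul_sigmoid (hp0 : ∀ n, 0 ≤ p n) {y : ℝ} (hy : y ∈ fDom p σ) (x : ℝ) :
    Summable fun n => p n * sigmoid (x + σ n * y) :=
  summable_mul_sigmoid_of_exp hp0 ((mem_fDom_iff_summable_mul_exp_add x y).1 hy)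

lemma hFDR_eq_tsum_softplus (z : ℝ × ℝ) :
    hFDR p σ z = ∑' n, p n * softplus (z.1 + σ n * z.2) := rfl

lemma hFDe_eq_ofReal (hp0 : ∀ n, 0 ≤ p n) {z : ℝ × ℝ}
    (hz : Summable fun n => p n * softplus (z.1 + σ n * z.2)) :
    hFDe p σ z = ENNReal.ofReal (hFDR p σ z) :=
  (ENNReal.ofReal_tsum_of_nonneg (fun n => mul_nonneg (hp0 n) (softplus_pos _).le) hz).symm

lemma summable_of_hFDe_ne_top (hp0 : ∀ n, 0 ≤ p n) {z : ℝ × ℝ} (h : hFDe p σ z ≠ ⊤) :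
    Summable fun n => p n * softplus (z.1 + σ n * z.2) :=
  (ENNReal.summable_toReal h).congr fun n =>
    ENNReal.toReal_ofReal (mul_nonneg (hp0 n) (softplus_pos _).le)

lemma hFDe_lt_top_iff (hp : ∀ n, 1 ≤ p n) {z : ℝ × ℝ} : hFDe p σ z < ⊤ ↔ z.2 ∈ fDom p σ := by
  have hp0 n : 0 ≤ p n := zero_le_one.trans (hp n)
  refine ⟨fun h => ?_, fun h => ?_⟩
  · have hs := summable_of_hFDe_ne_top hp0 h.ne
    have hbdd n : z.1 + σ n * z.2 ≤ ∑' n, p n * softplus (z.1 + σ n * z.2) :=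
      calc z.1 + σ n * z.2 ≤ softplus (z.1 + σ n * z.2) := (lt_softplus _).le
        _ ≤ p n * softplus (z.1 + σ n * z.2) := le_mul_of_one_le_left (softplus_pos _).le (hp n)
        _ ≤ _ := le_hasSum hs.hasSum n fun m _ => mul_nonneg (hp0 m) (softplus_pos _).le
    refine (mem_fDom_iff_summable_mul_exp_add z.1 z.2).2 (summable_mul_exp_of_sigmoid hp0 hbdd ?_)
    exact hs.of_nonneg_of_le (fun n => mul_nonneg (hp0 n) (sigmoid_nonneg _))
      fun n => mul_le_mul_of_nonneg_left (sigmoid_le_softplus _) (hp0 n)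
  · rw [hFDe_eq_ofReal hp0 (summable_mul_softplus hp0 h z.1)]
    exact ENNReal.ofReal_lt_top

lemma coe_hFDe_of_mem_fDom (hp0 : ∀ n, 0 ≤ p n) {z : ℝ × ℝ} (hz : z.2 ∈ fDom p σ) :
    ((hFDe p σ z : ℝ≥0∞) : EReal) = hFDR p σ z := by
  have h0 : 0 ≤ hFDR p σ z := tsum_nonneg fun n => mul_nonneg (hp0 n) (softplus_pos _).le
  rw [hFDe_eq_ofReal hp0 (summable_mul_softplus hp0 hz z.1), EReal.coe_ennreal_ofReal,
    max_eq_left h0]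

lemma interior_eq_Iio_of_Iio_subset_of_subset_Iic {s : Set ℝ} {a : ℝ} (h₁ : Iio a ⊆ s)
    (h₂ : s ⊆ Iic a) : interior s = Iio a :=
  ((interior_mono h₂).trans interior_Iic.subset).antisymm (interior_maximal h₁ isOpen_Iio)

lemma interior_setOf_hFDe_lt_top (hp : ∀ n, 1 ≤ p n) {a : ℝ} (h₁ : Iio a ⊆ fDom p σ)
    (h₂ : fDom p σ ⊆ Iic a) : interior {z : ℝ × ℝ | hFDe p σ z < ⊤} = univ ×ˢ Iio a := by
  have hdom : {z : ℝ × ℝ | hFDe p σ z < ⊤} = univ ×ˢ fDom p σ := by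
    ext z
    simp [hFDe_lt_top_iff hp]
  rw [hdom, interior_prod_eq, interior_univ, interior_eq_Iio_of_Iio_subset_of_subset_Iic h₁ h₂]

lemma hasFDerivAt_hFDR (hp0 : ∀ n, 0 ≤ p n) (hσ : ∀ n, 0 ≤ σ n) {y y' : ℝ}
    (hy' : y' ∈ fDom p σ) (hyy' : y < y') (x : ℝ) :
    HasFDerivAt (hFDR p σ)
      (gradCLM (∑' n, p n * sigmoid (x + σ n * y)) (∑' n, p n * σ n * sigmoid (x + σ n * y)))
      (x, y) := by
  obtain ⟨m, hym, hm⟩ := exists_between hyy'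
  have hy : y ∈ fDom p σ := mem_fDom_of_le hp0 hσ hy' hyy'.le
  have hxy : (x, y) ∈ Iio (x + 1) ×ˢ Iio m := ⟨lt_add_one x, hym⟩
  have hbound n (z : ℝ × ℝ) (hz : z ∈ Iio (x + 1) ×ˢ Iio m) :
      ‖gradCLM (p n * sigmoid (z.1 + σ n * z.2)) (p n * σ n * sigmoid (z.1 + σ n * z.2))‖ ≤
        p n * exp (x + 1 + σ n * m) + p n * σ n * exp (x + 1 + σ n * m) := by
    have hpσ : 0 ≤ p n * σ n := mul_nonneg (hp0 n) (hσ n)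
    have hexp : sigmoid (z.1 + σ n * z.2) ≤ exp (x + 1 + σ n * m) :=
      (sigmoid_le_exp _).trans (exp_le_exp.2 (add_le_add hz.1.le
        (mul_le_mul_of_nonneg_left hz.2.le (hσ n))))
    refine (norm_gradCLM_le _ _).trans (add_le_add ?_ ?_)
    · rw [abs_of_nonneg (mul_nonneg (hp0 n) (sigmoid_nonneg _))]
      exact mul_le_mul_of_nonneg_left hexp (hp0 n)
    · rw [abs_of_nonneg (mul_nonneg hpσ (sigmoid_nonneg _))]
      exact mul_le_mul_of_nonneg_left hexp hpσ
  have hsum := hasFDerivAt_tsum_of_isPreconnected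
    (((mem_fDom_iff_summable_mul_exp_add (x + 1) m).1 (mem_fDom_of_le hp0 hσ hy' hm.le)).add
      (summable_mul_mul_exp_add hp0 hσ hy' hm (x + 1)))
    (isOpen_Iio.prod isOpen_Iio) ((convex_Iio _).prod (convex_Iio _)).isPreconnected
    (fun n z _ => hasFDerivAt_mul_softplus (p n) (σ n) z) hbound hxy
    (summable_mul_softplus hp0 hy x) hxy
  rwa [tsum_gradCLM (summable_mul_sigmoid hp0 hy x)
    (summable_mul_sigmoid_of_exp (c := fun n => p n * σ n) (fun n => mul_nonneg (hp0 n) (hσ n))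
      (summable_mul_mul_exp_add hp0 hσ hy' hyy' x))] at hsum

lemma mem_subd2_hFDe_iff (hp : ∀ n, 1 ≤ p n) {z : ℝ × ℝ} (hz : z.2 ∈ fDom p σ) (w : ℝ × ℝ) :
    w ∈ subd2 (fun z => ((hFDe p σ z : ℝ≥0∞) : EReal)) z ↔
      ∀ z' : ℝ × ℝ, z'.2 ∈ fDom p σ →
        hFDR p σ z + (w.1 * (z'.1 - z.1) + w.2 * (z'.2 - z.2)) ≤ hFDR p σ z' := by
  have hp0 n : 0 ≤ p n := zero_le_one.trans (hp n)
  refine ⟨fun hw z' hz' => ?_, fun hw z' => ?_⟩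
  · have h := hw z'
    beta_reduce at h
    rwa [coe_hFDe_of_mem_fDom hp0 hz, coe_hFDe_of_mem_fDom hp0 hz', ← EReal.coe_add,
      EReal.coe_le_coe_iff] at h
  beta_reduce
  by_cases hz' : z'.2 ∈ fDom p σ
  · rw [coe_hFDe_of_mem_fDom hp0 hz, coe_hFDe_of_mem_fDom hp0 hz', ← EReal.coe_add,
      EReal.coe_le_coe_iff]
    exact hw z' hz'
  · rw [not_lt_top_iff.1 (mt (hFDe_lt_top_iff hp).1 hz'), EReal.coe_ennreal_top]
    exact le_top

/-- The subgradient inequality, summed term by term from the tangent line inequality of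
`softplus`. -/
lemma hFDR_add_le (hp0 : ∀ n, 0 ≤ p n) {x y : ℝ} (hy : y ∈ fDom p σ)
    (hb : Summable fun n => p n * σ n * sigmoid (x + σ n * y)) {z : ℝ × ℝ}
    (hz : z.2 ∈ fDom p σ) :
    hFDR p σ (x, y) + ((∑' n, p n * sigmoid (x + σ n * y)) * (z.1 - x) +
      (∑' n, p n * σ n * sigmoid (x + σ n * y)) * (z.2 - y)) ≤ hFDR p σ z := by
  have hterm n : p n * sigmoid (x + σ n * y) * (z.1 - x) +
      p n * σ n * sigmoid (x + σ n * y) * (z.2 - y) ≤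
        p n * softplus (z.1 + σ n * z.2) - p n * softplus (x + σ n * y) := by
    linear_combination
      mul_le_mul_of_nonneg_left (sigmoid_mul_sub_le (x + σ n * y) (z.1 + σ n * z.2)) (hp0 n)
  have h := hasSum_le hterm
    (((summable_mul_sigmoid hp0 hy x).hasSum.mul_right _).add (hb.hasSum.mul_right _))
    ((summable_mul_softplus hp0 hz z.1).hasSum.sub (summable_mul_softplus hp0 hy x).hasSum)
  rw [hFDR_eq_tsum_softplus, hFDR_eq_tsum_softplus]
  linarith

lemma hasDerivAt_hFDR_fst (hp0 : ∀ n, 0 ≤ p n) {y : ℝ} (hy : y ∈ fDom p σ) (x : ℝ) :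
    HasDerivAt (fun x' => hFDR p σ (x', y)) (∑' n, p n * sigmoid (x + σ n * y)) x := by
  have hx : x ∈ Iio (x + 1) := lt_add_one x
  refine hasDerivAt_tsum_of_isPreconnected (g := fun n x' => p n * softplus (x' + σ n * y))
    (g' := fun n x' => p n * sigmoid (x' + σ n * y))
    ((mem_fDom_iff_summable_mul_exp_add (x + 1) y).1 hy) isOpen_Iio
    (convex_Iio _).isPreconnected (fun n x' _ => ?_) (fun n x' hx' => ?_) hx
    (summable_mul_softplus hp0 hy x) hx
  · simpa using ((hasDerivAt_softplus _).comp x' ((hasDerivAt_id x').add_const _)).const_mul (p n)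
  · rw [norm_of_nonneg (mul_nonneg (hp0 n) (sigmoid_nonneg _))]
    exact mul_le_mul_of_nonneg_left
      ((sigmoid_le_exp _).trans (exp_le_exp.2 (by linarith [mem_Iio.1 hx']))) (hp0 n)

lemma fst_eq_of_mem_subd2_hFDe (hp : ∀ n, 1 ≤ p n) {x y : ℝ} (hy : y ∈ fDom p σ) {w : ℝ × ℝ}
    (hw : w ∈ subd2 (fun z => ((hFDe p σ z : ℝ≥0∞) : EReal)) (x, y)) :
    w.1 = ∑' n, p n * sigmoid (x + σ n * y) := by
  have hp0 n : 0 ≤ p n := zero_le_one.trans (hp n)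
  have hmin : IsLocalMin (fun x' => hFDR p σ (x', y) - w.1 * x') x :=
    Eventually.of_forall fun x' => by
      have h := (mem_subd2_hFDe_iff hp (z := (x, y)) hy w).1 hw (x', y) hy
      simp only [sub_self, mul_zero, add_zero] at h
      linarith
  have h := hmin.hasDerivAt_eq_zero
    ((hasDerivAt_hFDR_fst hp0 hy x).sub ((hasDerivAt_id x).const_mul w.1))
  linarith

lemma sum_range_mul_sigmoid_mul_le (hp0 : ∀ n, 0 ≤ p n) (hσ : ∀ n, 0 ≤ σ n) {x y y' : ℝ}
    (hy : y ∈ fDom p σ) (hy' : y' ∈ fDom p σ) (h : y' ≤ y) (N : ℕ) :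
    (∑ k ∈ Finset.range N, p k * σ k * sigmoid (x + σ k * y')) * (y - y') ≤
      hFDR p σ (x, y) - hFDR p σ (x, y') := by
  have hterm k : p k * σ k * sigmoid (x + σ k * y') * (y - y') ≤
      p k * softplus (x + σ k * y) - p k * softplus (x + σ k * y') := by
    linear_combination
      mul_le_mul_of_nonneg_left (sigmoid_mul_sub_le (x + σ k * y') (x + σ k * y)) (hp0 k)
  have hnonneg k : 0 ≤ p k * softplus (x + σ k * y) - p k * softplus (x + σ k * y') :=
    sub_nonneg.2 (mul_le_mul_of_nonneg_left
      (softplus_monotone (by linarith [mul_le_mul_of_nonneg_left h (hσ k)])) (hp0 k))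
  rw [Finset.sum_mul, hFDR_eq_tsum_softplus, hFDR_eq_tsum_softplus]
  exact (Finset.sum_le_sum fun k _ => hterm k).trans (sum_le_hasSum _ (fun k _ => hnonneg k)
    ((summable_mul_softplus hp0 hy x).hasSum.sub (summable_mul_softplus hp0 hy' x).hasSum))

/-- The subgradient inequality towards `(x, y')`, `y' < y`, bounds the difference quotients of
the finite partial sums; letting `y' → y` gives the bound at `y` itself. -/
lemma sum_range_le_snd_of_mem_subd2_hFDe (hp : ∀ n, 1 ≤ p n) (hσ : ∀ n, 0 ≤ σ n) {x y : ℝ}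
    (hlow : Iio y ⊆ fDom p σ) (hy : y ∈ fDom p σ) {w : ℝ × ℝ}
    (hw : w ∈ subd2 (fun z => ((hFDe p σ z : ℝ≥0∞) : EReal)) (x, y)) (N : ℕ) :
    ∑ k ∈ Finset.range N, p k * σ k * sigmoid (x + σ k * y) ≤ w.2 := by
  have hp0 n : 0 ≤ p n := zero_le_one.trans (hp n)
  have hle y' (hy' : y' < y) : ∑ k ∈ Finset.range N, p k * σ k * sigmoid (x + σ k * y') ≤ w.2 := by
    have h₁ := sum_range_mul_sigmoid_mul_le hp0 hσ (x := x) hy (hlow hy') hy'.le N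
    have h₂ := (mem_subd2_hFDe_iff hp (z := (x, y)) hy w).1 hw (x, y') (hlow hy')
    simp only [sub_self, mul_zero, zero_add] at h₂
    exact le_of_mul_le_mul_right (by linarith) (sub_pos.2 hy')
  have hcont : Continuous fun y' => ∑ k ∈ Finset.range N, p k * σ k * sigmoid (x + σ k * y') :=
    continuous_finsetSum _ fun k _ => continuous_const.mul (continuous_sigmoid.comp (by fun_prop))
  exact le_of_tendsto (hcont.tendsto y |>.mono_left nhdsWithin_le_nhds)
    (eventually_nhdsWithin_of_forall (s := Iio y) hle)

lemma summable_of_mem_subd2_hFDe (hp : ∀ n, 1 ≤ p n) (hσ : ∀ n, 0 ≤ σ n) {x y : ℝ}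
    (hlow : Iio y ⊆ fDom p σ) (hy : y ∈ fDom p σ) {w : ℝ × ℝ}
    (hw : w ∈ subd2 (fun z => ((hFDe p σ z : ℝ≥0∞) : EReal)) (x, y)) :
    Summable fun n => p n * σ n * sigmoid (x + σ n * y) :=
  summable_of_sum_range_le
    (fun n => mul_nonneg (mul_nonneg (zero_le_one.trans (hp n)) (hσ n)) (sigmoid_nonneg _))
    (sum_range_le_snd_of_mem_subd2_hFDe hp hσ hlow hy hw)

lemma subd2_hFDe_eq (hp : ∀ n, 1 ≤ p n) (hσ : ∀ n, 0 ≤ σ n) {x y : ℝ}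
    (hlow : Iio y ⊆ fDom p σ) (hup : fDom p σ ⊆ Iic y) (hy : y ∈ fDom p σ)
    (hb : Summable fun n => p n * σ n * sigmoid (x + σ n * y)) :
    subd2 (fun z => ((hFDe p σ z : ℝ≥0∞) : EReal)) (x, y) =
      {∑' n, p n * sigmoid (x + σ n * y)} ×ˢ Ici (∑' n, p n * σ n * sigmoid (x + σ n * y)) := by
  have hp0 n : 0 ≤ p n := zero_le_one.trans (hp n)
  ext w
  refine ⟨fun hw => ⟨fst_eq_of_mem_subd2_hFDe hp hy hw, le_of_tendsto' hb.hasSum.tendsto_sum_nat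
    (sum_range_le_snd_of_mem_subd2_hFDe hp hσ hlow hy hw)⟩, fun ⟨hw₁, hw₂⟩ => ?_⟩
  refine (mem_subd2_hFDe_iff hp (z := (x, y)) hy w).2 fun z hz => ?_
  have h := hFDR_add_le hp0 hy hb hz
  have hw₂' := mul_le_mul_of_nonpos_right (mem_Ici.1 hw₂) (sub_nonpos.2 (hup hz))
  rw [mem_singleton_iff.1 hw₁]
  linarith

end

theorem stmt14_general (p σ : ℕ → ℝ) (hp : ∀ n, 1 ≤ p n) (hσpos : ∀ n, 0 < σ n)
    (α : ℝ) (hα : 0 ≤ α) (h1 : Set.Iio (-α) ⊆ fDom p σ) (h2 : fDom p σ ⊆ Set.Iic (-α)) :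
    (interior {z : ℝ × ℝ | hFDe p σ z < ⊤} = Set.univ ×ˢ Set.Iio (-α)) ∧
    (∀ x y : ℝ, y < -α →
      (Summable fun n => p n * (Real.exp (x + σ n * y) / (1 + Real.exp (x + σ n * y)))) ∧
      (Summable fun n => p n * σ n * (Real.exp (x + σ n * y) / (1 + Real.exp (x + σ n * y)))) ∧
      HasFDerivAt (hFDR p σ)
        (gradCLM (∑' n, p n * (Real.exp (x + σ n * y) / (1 + Real.exp (x + σ n * y))))
          (∑' n, p n * σ n * (Real.exp (x + σ n * y) / (1 + Real.exp (x + σ n * y)))))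
        (x, y)) ∧
    (-α ∈ fDom p σ → ∀ x : ℝ,
      ((subd2 (fun z => ((hFDe p σ z : ℝ≥0∞) : EReal)) (x, -α)).Nonempty ↔
        Summable fun n => p n * σ n * Real.exp (x - σ n * α)) ∧
      ((Summable fun n => p n * σ n * Real.exp (x - σ n * α)) ↔
        ∃ L : ℝ × ℝ, Tendsto (fun N => ∑ k ∈ Finset.range N,
          (p k * (Real.exp (x - σ k * α) / (1 + Real.exp (x - σ k * α)))) • ((1 : ℝ), σ k))
          atTop (nhds L)) ∧
      (∀ ub vb : ℝ, Tendsto (fun N => ∑ k ∈ Finset.range N,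
          (p k * (Real.exp (x - σ k * α) / (1 + Real.exp (x - σ k * α)))) • ((1 : ℝ), σ k))
          atTop (nhds (ub, vb)) →
        subd2 (fun z => ((hFDe p σ z : ℝ≥0∞) : EReal)) (x, -α) = {ub} ×ˢ Set.Ici vb)) := by
  have hp0 n : 0 ≤ p n := zero_le_one.trans (hp n)
  have hσ n : 0 ≤ σ n := (hσpos n).le
  have hpσ n : 0 ≤ p n * σ n := mul_nonneg (hp0 n) (hσ n)
  simp only [← sigmoid_eq_exp_div]
  refine ⟨interior_setOf_hFDe_lt_top hp h1 h2, fun x y hy => ?_, fun hd x => ?_⟩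
  · obtain ⟨y', hyy', hy'⟩ := exists_between hy
    exact ⟨summable_mul_sigmoid hp0 (h1 (hyy'.trans hy')) x,
      summable_mul_sigmoid_of_exp hpσ (summable_mul_mul_exp_add hp0 hσ (h1 hy') hyy' x),
      hasFDerivAt_hFDR hp0 hσ (h1 hy') hyy' x⟩
  have hneg n : x - σ n * α = x + σ n * -α := by ring
  simp only [hneg, Prod.smul_mk, smul_eq_mul, mul_one, mul_right_comm _ (sigmoid _) (σ _)]
  have hb : (Summable fun n => p n * σ n * sigmoid (x + σ n * -α)) ↔
      Summable fun n => p n * σ n * exp (x + σ n * -α) :=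
    ⟨summable_mul_exp_of_sigmoid hpσ (M := x) fun n => by linarith [mul_nonneg (hσ n) hα],
      summable_mul_sigmoid_of_exp hpσ⟩
  have hpair (u v : ℝ) := tendsto_sum_range_prodMk_iff (u := u) (v := v)
    (fun n => mul_nonneg (hp0 n) (sigmoid_nonneg (x + σ n * -α)))
    (fun n => mul_nonneg (hpσ n) (sigmoid_nonneg (x + σ n * -α)))
  refine ⟨⟨fun ⟨w, hw⟩ => hb.1 (summable_of_mem_subd2_hFDe hp hσ h1 hd hw), fun h => ?_⟩,
    ⟨fun h => ⟨_, (hpair _ _).2 ⟨(summable_mul_sigmoid hp0 hd x).hasSum, (hb.2 h).hasSum⟩⟩,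
      fun ⟨⟨_, _⟩, hL⟩ => hb.1 ((hpair _ _).1 hL).2.summable⟩, fun ub vb hL => ?_⟩
  · rw [subd2_hFDe_eq hp hσ h1 h2 hd (hb.2 h)]
    exact (singleton_nonempty _).prod nonempty_Ici
  · obtain ⟨hu, hv⟩ := (hpair _ _).1 hL
    rw [subd2_hFDe_eq hp hσ h1 h2 hd hv.summable, hu.tsum_eq, hv.tsum_eq]

theorem stmt14 (p σ : ℕ → ℝ) (hp : ∀ n, 1 ≤ p n) (hσpos : ∀ n, 0 < σ n)
    (hσtop : Tendsto σ atTop atTop) (hne : (fDom p σ).Nonempty)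
    (α : ℝ) (hα : 0 ≤ α) (h1 : Set.Iio (-α) ⊆ fDom p σ) (h2 : fDom p σ ⊆ Set.Iic (-α)) :
    (interior {z : ℝ × ℝ | hFDe p σ z < ⊤} = Set.univ ×ˢ Set.Iio (-α)) ∧
    (∀ x y : ℝ, y < -α →
      (Summable fun n => p n * (Real.exp (x + σ n * y) / (1 + Real.exp (x + σ n * y)))) ∧
      (Summable fun n => p n * σ n * (Real.exp (x + σ n * y) / (1 + Real.exp (x + σ n * y)))) ∧
      HasFDerivAt (hFDR p σ)
        (gradCLM (∑' n, p n * (Real.exp (x + σ n * y) / (1 + Real.exp (x + σ n * y))))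
          (∑' n, p n * σ n * (Real.exp (x + σ n * y) / (1 + Real.exp (x + σ n * y)))))
        (x, y)) ∧
    (-α ∈ fDom p σ → ∀ x : ℝ,
      ((subd2 (fun z => ((hFDe p σ z : ℝ≥0∞) : EReal)) (x, -α)).Nonempty ↔
        Summable fun n => p n * σ n * Real.exp (x - σ n * α)) ∧
      ((Summable fun n => p n * σ n * Real.exp (x - σ n * α)) ↔
        ∃ L : ℝ × ℝ, Tendsto (fun N => ∑ k ∈ Finset.range N,
          (p k * (Real.exp (x - σ k * α) / (1 + Real.exp (x - σ k * α)))) • ((1 : ℝ), σ k))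
          atTop (nhds L)) ∧
      (∀ ub vb : ℝ, Tendsto (fun N => ∑ k ∈ Finset.range N,
          (p k * (Real.exp (x - σ k * α) / (1 + Real.exp (x - σ k * α)))) • ((1 : ℝ), σ k))
          atTop (nhds (ub, vb)) →
        subd2 (fun z => ((hFDe p σ z : ℝ≥0∞) : EReal)) (x, -α) = {ub} ×ˢ Set.Ici vb)) :=
  stmt14_general p σ hp hσpos α hα h1 h2
end

section
/- Let (p_n)_{n≥1} ⊆ [1,∞) and (σ_n)_{n≥1} ⊆ ℝ. Let (x,y) ∈ ℝ² satisfy x + σ_n y < 0 for all n ≥ 1, and suppose the series Σ_{n≥1} p_n (e^{x+σ_n y}/(1−e^{x+σ_n y}))·(1,σ_n) converges in ℝ² with sum (u,v). Then the problem of minimizing Σ_{n≥1} p_n E_BE(u_n/p_n) over all sequences (u_n)_{n≥1} of nonnegative reals with Σ_{n≥1} u_n = u and Σ_{n≥1} σ_n u_n = v has the unique optimal solution ū_n := p_n e^{x+σ_n y}/(1−e^{x+σ_n y}) (n ≥ 1), and the optimal value equals h_BE*(u,v); that is, H_BE(u,v) = h_BE*(u,v) and the infimum defining H_BE(u,v)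 is attained exactly at (ū_n)_{n≥1}. -/
/-!
Weak duality comes from the pointwise Fenchel–Young inequality
`q t − E_BE^*(t) ≤ E_BE(q)` (for `q ≥ 0`, `t < 0`), scaled by `p_n` and summed against the two
linear constraints: for every feasible `(w_n)` and every `(x', y')`,
`u x' + v y' − h_BE(x', y') ≤ Σ p_n E_BE(w_n / p_n)`. Equality in Fenchel–Young holds exactly at
`q = e^t / (1 − e^t)`, so `ū` closes the duality gap at `(x, y)`; this gives the value of `H_BE`
and `h_BE^*`. Conversely any feasible `w` of the same value has a nonnegative series of
Fenchel–Young defects summing to `0`, so every defect vanishes and `w = ū`.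
-/

open Filter

/-- The Bose–Einstein entropy, with values in `ℝ ∪ {+∞}`. -/
noncomputable def EBEe (u : ℝ) : EReal :=
  if 0 ≤ u then ((u * Real.log u - (1 + u) * Real.log (1 + u) : ℝ) : EReal) else ⊤

/-- The Maxwell–Boltzmann entropy, with values in `ℝ ∪ {+∞}`. -/
noncomputable def EMBe (u : ℝ) : EReal :=
  if 0 ≤ u then ((u * (Real.log u - 1) : ℝ) : EReal) else ⊤

/-- The Fermi–Dirac entropy, with values in `ℝ ∪ {+∞}`. -/
noncomputable def EFDe (u : ℝ) : EReal :=
  if 0 ≤ u ∧ u ≤ 1 then ((u * Real.log u + (1 - u) * Real.log (1 - u) : ℝ) : EReal) else ⊤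

/-- The sum of a series in `ℝ ∪ {±∞}`, following the paper's convention: the limit of the
partial sums when this limit exists in `[−∞,+∞]`, and `+∞` otherwise. -/
noncomputable def serSum (β : ℕ → EReal) : EReal :=
  @dite _ (∃ l : EReal, Tendsto (fun N => ∑ k ∈ Finset.range N, β k) atTop (nhds l))
    (Classical.dec _) (fun h => h.choose) (fun _ => ⊤)

/-- `S(u,v)`: the set of sequences of nonnegative reals with `Σ u_n = u` and `Σ σ_n u_n = v`
(sums as limits of partial sums). -/
def Sfeas (σ : ℕ → ℝ) (u v : ℝ) : Set (ℕ → ℝ) :=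
  {w | (∀ n, 0 ≤ w n) ∧
    Tendsto (fun N => ∑ k ∈ Finset.range N, w k) atTop (nhds u) ∧
    Tendsto (fun N => ∑ k ∈ Finset.range N, σ k * w k) atTop (nhds v)}

/-- The value (marginal) function `H_W(u,v) = inf { Σ p_n W(u_n/p_n) : (u_n) ∈ S(u,v) }`,
with `inf ∅ = +∞`. -/
noncomputable def Hval (p σ : ℕ → ℝ) (W : ℝ → EReal) (u v : ℝ) : EReal :=
  sInf ((fun w => serSum fun n => (p n : EReal) * W (w n / p n)) '' Sfeas σ u v)
open scoped ENNReal

/-- `h_BE(x,y) = Σ_n p_n E_BE^*(x+σ_n y)`, where `E_BE^*(t) = −ln(1−e^t)` for `t < 0`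
and `+∞` for `t ≥ 0`. -/
noncomputable def hBEe (p σ : ℕ → ℝ) (z : ℝ × ℝ) : ℝ≥0∞ :=
  ∑' n, if z.1 + σ n * z.2 < 0 then
    ENNReal.ofReal (p n * (-Real.log (1 - Real.exp (z.1 + σ n * z.2)))) else ⊤

/-- The Fenchel conjugate `h_BE^*(u,v) = sup_{(x,y)} (ux + vy − h_BE(x,y))`. -/
noncomputable def hBEstar (p σ : ℕ → ℝ) (u v : ℝ) : EReal :=
  ⨆ z : ℝ × ℝ, (((u * z.1 + v * z.2 : ℝ) : EReal) - ((hBEe p σ z : ℝ≥0∞) : EReal))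

/-- The candidate optimal solution `ū_n = p_n e^{x+σ_n y}/(1−e^{x+σ_n y})`. -/
noncomputable def uBarBE (p σ : ℕ → ℝ) (x y : ℝ) (n : ℕ) : ℝ :=
  p n * (Real.exp (x + σ n * y) / (1 - Real.exp (x + σ n * y)))

open Topology Real Finset

noncomputable def entropyBE (q : ℝ) : ℝ := q * log q - (1 + q) * log (1 + q)

/-- `E_BE^*` on its domain `t < 0`. -/
noncomputable def conjBE (t : ℝ) : ℝ := -log (1 - exp t)

lemma EBEe_of_nonneg {q : ℝ} (hq : 0 ≤ q) : EBEe q = (entropyBE q : EReal) := if_pos hq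

section FenchelYoung

variable {p q t w : ℝ}

lemma conjBE_nonneg (ht : t < 0) : 0 ≤ conjBE t :=
  neg_nonneg.2 (log_nonpos (by linarith [exp_lt_one_iff.2 ht]) (by linarith [exp_pos t]))

lemma conjBE_le (ht : t < 0) : conjBE t ≤ exp t / (1 - exp t) := by
  have hs : 0 < 1 - exp t := by linarith [exp_lt_one_iff.2 ht]
  have h := one_sub_inv_le_log_of_pos hs
  have e : exp t / (1 - exp t) = (1 - exp t)⁻¹ - 1 := by field_simp; ring
  rw [conjBE, e]
  linarith

lemma sub_le_mul_log_sub_log {r : ℝ} (hq : 0 ≤ q) (hr : 0 < r) :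
    q - r ≤ q * (log q - log r) := by
  rcases hq.eq_or_lt with rfl | hq
  · simpa using hr.le
  · have h := log_le_sub_one_of_pos (div_pos hr hq)
    rw [log_div hr.ne' hq.ne'] at h
    have h' := mul_le_mul_of_nonneg_left h hq.le
    rw [mul_sub_one, mul_div_cancel₀ _ hq.ne'] at h'
    linarith

/-- As `X − 1 − log X ≥ 0` with equality only at `X = 1`, this gives Fenchel–Young for `E_BE`
together with its equality case. -/
lemma sub_one_sub_log_le_entropyBE_sub (hq : 0 ≤ q) (ht : t < 0) :
    (1 + q) * (1 - exp t) - 1 - log ((1 + q) * (1 - exp t))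
      ≤ entropyBE q - (q * t - conjBE t) := by
  have hs : 0 < 1 - exp t := by linarith [exp_lt_one_iff.2 ht]
  have h := sub_le_mul_log_sub_log hq (by positivity : 0 < (1 + q) * exp t)
  rw [log_mul (by linarith) (exp_pos t).ne', log_exp] at h
  rw [log_mul (by linarith) hs.ne', entropyBE, conjBE]
  linarith

lemma mul_sub_conjBE_le_entropyBE (hq : 0 ≤ q) (ht : t < 0) :
    q * t - conjBE t ≤ entropyBE q := by
  have hX : 0 < (1 + q) * (1 - exp t) := mul_pos (by linarith) (by linarith [exp_lt_one_iff.2 ht])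
  linarith [sub_one_sub_log_le_entropyBE_sub hq ht, log_le_sub_one_of_pos hX]

lemma eq_of_entropyBE_eq_mul_sub_conjBE (hq : 0 ≤ q) (ht : t < 0)
    (h : entropyBE q = q * t - conjBE t) : q = exp t / (1 - exp t) := by
  have hs : 0 < 1 - exp t := by linarith [exp_lt_one_iff.2 ht]
  have hX : (1 + q) * (1 - exp t) = 1 := by
    by_contra hne
    linarith [sub_one_sub_log_le_entropyBE_sub hq ht,
      log_lt_sub_one_of_pos (mul_pos (by linarith) hs) hne]
  field_simp
  linarith

lemma entropyBE_eq_mul_sub_conjBE (ht : t < 0) :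
    entropyBE (exp t / (1 - exp t)) = exp t / (1 - exp t) * t - conjBE t := by
  have hs : 0 < 1 - exp t := by linarith [exp_lt_one_iff.2 ht]
  have h1 : log (1 + exp t / (1 - exp t)) = -log (1 - exp t) := by
    rw [← log_inv]
    congr 1
    field_simp
    ring
  rw [entropyBE, conjBE, h1, log_div (exp_pos t).ne' hs.ne', log_exp]
  ring

lemma mul_sub_mul_conjBE_le (hp : 0 < p) (hw : 0 ≤ w) (ht : t < 0) :
    w * t - p * conjBE t ≤ p * entropyBE (w / p) := by
  have h := mul_le_mul_of_nonneg_left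
    (mul_sub_conjBE_le_entropyBE (div_nonneg hw hp.le) ht) hp.le
  rwa [mul_sub, ← mul_assoc, mul_div_cancel₀ _ hp.ne'] at h

lemma eq_of_mul_entropyBE_eq (hp : 0 < p) (hw : 0 ≤ w) (ht : t < 0)
    (h : p * entropyBE (w / p) = w * t - p * conjBE t) :
    w = p * (exp t / (1 - exp t)) := by
  rw [← eq_of_entropyBE_eq_mul_sub_conjBE (div_nonneg hw hp.le) ht, mul_div_cancel₀ _ hp.ne']
  refine mul_left_cancel₀ hp.ne' ?_
  rw [h, mul_sub, ← mul_assoc, mul_div_cancel₀ _ hp.ne']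

lemma mul_entropyBE_eq (hp : p ≠ 0) (ht : t < 0) :
    p * entropyBE (p * (exp t / (1 - exp t)) / p)
      = p * (exp t / (1 - exp t)) * t - p * conjBE t := by
  rw [mul_div_cancel_left₀ _ hp, entropyBE_eq_mul_sub_conjBE ht]
  ring

end FenchelYoung

section Series

lemma EReal.coe_finset_sum {ι : Type*} (s : Finset ι) (f : ι → ℝ) :
    ((∑ i ∈ s, f i : ℝ) : EReal) = ∑ i ∈ s, (f i : EReal) :=
  map_sum (⟨⟨Real.toEReal, EReal.coe_zero⟩, EReal.coe_add⟩ : ℝ →+ EReal) f s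

variable {f g : ℕ → ℝ}

lemma tendsto_coe_sum_range {L : ℝ}
    (h : Tendsto (fun N => ∑ k ∈ range N, f k) atTop (𝓝 L)) :
    Tendsto (fun N => ∑ k ∈ range N, (f k : EReal)) atTop (𝓝 (L : EReal)) := by
  simpa only [EReal.coe_finset_sum] using EReal.tendsto_coe.2 h

lemma serSum_coe_of_tendsto {L : ℝ}
    (h : Tendsto (fun N => ∑ k ∈ range N, f k) atTop (𝓝 L)) :
    serSum (fun n => (f n : EReal)) = L := by
  have hex := (⟨_, tendsto_coe_sum_range h⟩ :
    ∃ l : EReal, Tendsto (fun N => ∑ k ∈ range N, (f k : EReal)) atTop (𝓝 l))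
  rw [serSum, dif_pos hex]
  exact tendsto_nhds_unique hex.choose_spec (tendsto_coe_sum_range h)

lemma tendsto_of_serSum_coe_eq_coe {L : ℝ} (h : serSum (fun n => (f n : EReal)) = L) :
    Tendsto (fun N => ∑ k ∈ range N, f k) atTop (𝓝 L) := by
  rw [serSum] at h
  split_ifs at h with hex
  · rw [← EReal.tendsto_coe]
    simpa only [EReal.coe_finset_sum, h] using hex.choose_spec
  · exact absurd h (EReal.top_ne_coe L)

lemma coe_le_serSum_coe_of_le {C : ℝ} (hle : ∀ n, g n ≤ f n)
    (hg : Tendsto (fun N => ∑ k ∈ range N, g k) atTop (𝓝 C)) :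
    (C : EReal) ≤ serSum (fun n => (f n : EReal)) := by
  rw [serSum]
  split_ifs with hex
  · refine le_of_tendsto_of_tendsto' (tendsto_coe_sum_range hg) hex.choose_spec fun N => ?_
    rw [← EReal.coe_finset_sum, ← EReal.coe_finset_sum]
    exact_mod_cast sum_le_sum fun k _ => hle k
  · exact le_top

end Series

section Duality

variable {p σ w : ℕ → ℝ} {u v : ℝ} {z : ℝ × ℝ}

noncomputable def hBEterm (p σ : ℕ → ℝ) (z : ℝ × ℝ) (n : ℕ) : ℝ :=
  p n * conjBE (z.1 + σ n * z.2)

lemma serSum_EBEe_eq (hp : ∀ n, 0 < p n) (hw : ∀ n, 0 ≤ w n) :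
    serSum (fun n => (p n : EReal) * EBEe (w n / p n))
      = serSum (fun n => ((p n * entropyBE (w n / p n) : ℝ) : EReal)) := by
  congr 1
  funext n
  rw [EBEe_of_nonneg (div_nonneg (hw n) (hp n).le), EReal.coe_mul]

lemma forall_neg_of_hBEe_ne_top (h : hBEe p σ z ≠ ⊤) : ∀ n, z.1 + σ n * z.2 < 0 := by
  intro n
  by_contra hn
  refine h (top_le_iff.1 ?_)
  have := ENNReal.le_tsum (f := fun n => if z.1 + σ n * z.2 < 0 then
    ENNReal.ofReal (p n * (-log (1 - exp (z.1 + σ n * z.2)))) else ⊤) n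
  rwa [if_neg hn] at this

lemma hBEe_eq_tsum (hz : ∀ n, z.1 + σ n * z.2 < 0) :
    hBEe p σ z = ∑' n, ENNReal.ofReal (hBEterm p σ z n) :=
  tsum_congr fun n => if_pos (hz n)

lemma hBEterm_nonneg (hp : ∀ n, 0 ≤ p n) (hz : ∀ n, z.1 + σ n * z.2 < 0) (n : ℕ) :
    0 ≤ hBEterm p σ z n :=
  mul_nonneg (hp n) (conjBE_nonneg (hz n))

lemma summable_hBEterm_of_hBEe_ne_top (hp : ∀ n, 0 ≤ p n) (h : hBEe p σ z ≠ ⊤) :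
    Summable (hBEterm p σ z) := by
  have hz := forall_neg_of_hBEe_ne_top h
  rw [hBEe_eq_tsum hz] at h
  exact (ENNReal.summable_toReal h).congr fun n =>
    ENNReal.toReal_ofReal (hBEterm_nonneg hp hz n)

lemma coe_hBEe_eq (hp : ∀ n, 0 ≤ p n) (hz : ∀ n, z.1 + σ n * z.2 < 0) {A : ℝ}
    (hA : HasSum (hBEterm p σ z) A) : ((hBEe p σ z : ℝ≥0∞) : EReal) = A := by
  rw [hBEe_eq_tsum hz, ← ENNReal.ofReal_tsum_of_nonneg (hBEterm_nonneg hp hz) hA.summable,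
    hA.tsum_eq, EReal.coe_ennreal_ofReal,
    max_eq_left (hA.nonneg (hBEterm_nonneg hp hz))]

lemma tendsto_sum_lagrangian (hw : w ∈ Sfeas σ u v) {A : ℝ} (hA : HasSum (hBEterm p σ z) A) :
    Tendsto (fun N => ∑ k ∈ range N, (w k * (z.1 + σ k * z.2) - hBEterm p σ z k)) atTop
      (𝓝 (u * z.1 + v * z.2 - A)) := by
  obtain ⟨-, hwu, hwv⟩ := hw
  refine (((hwu.mul_const z.1).add (hwv.mul_const z.2)).sub hA.tendsto_sum_nat).congr fun N => ?_
  simp only [sum_mul, ← sum_add_distrib, ← sum_sub_distrib]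
  exact sum_congr rfl fun k _ => by ring

lemma coe_sub_hBEe_le_serSum (hp : ∀ n, 0 < p n) (hw : w ∈ Sfeas σ u v) (z : ℝ × ℝ) :
    ((u * z.1 + v * z.2 : ℝ) : EReal) - ((hBEe p σ z : ℝ≥0∞) : EReal)
      ≤ serSum (fun n => (p n : EReal) * EBEe (w n / p n)) := by
  by_cases htop : hBEe p σ z = ⊤
  · simp [htop]
  have hz := forall_neg_of_hBEe_ne_top htop
  have hA := (summable_hBEterm_of_hBEe_ne_top (fun n => (hp n).le) htop).hasSum
  rw [coe_hBEe_eq (fun n => (hp n).le) hz hA, ← EReal.coe_sub, serSum_EBEe_eq hp hw.1]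
  exact coe_le_serSum_coe_of_le (fun n => mul_sub_mul_conjBE_le (hp n) (hw.1 n) (hz n))
    (tendsto_sum_lagrangian hw hA)

lemma hBEstar_le_serSum (hp : ∀ n, 0 < p n) (hw : w ∈ Sfeas σ u v) :
    hBEstar p σ u v ≤ serSum (fun n => (p n : EReal) * EBEe (w n / p n)) :=
  iSup_le (coe_sub_hBEe_le_serSum hp hw)

lemma Hval_eq_hBEstar_of_serSum_eq (hp : ∀ n, 0 < p n) (hw : w ∈ Sfeas σ u v)
    (h : serSum (fun n => (p n : EReal) * EBEe (w n / p n)) = hBEstar p σ u v) :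
    Hval p σ EBEe u v = hBEstar p σ u v := by
  refine IsGLB.sInf_eq (IsLeast.isGLB ⟨⟨w, hw, h⟩, ?_⟩)
  rintro _ ⟨w', hw', rfl⟩
  exact hBEstar_le_serSum hp hw'

lemma eq_uBarBE_of_serSum_eq (hp : ∀ n, 0 < p n) (hz : ∀ n, z.1 + σ n * z.2 < 0)
    (hw : w ∈ Sfeas σ u v) {A : ℝ} (hA : HasSum (hBEterm p σ z) A)
    (h : serSum (fun n => (p n : EReal) * EBEe (w n / p n)) = (u * z.1 + v * z.2 - A : ℝ)) :
    w = uBarBE p σ z.1 z.2 := by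
  rw [serSum_EBEe_eq hp hw.1] at h
  set defect : ℕ → ℝ := fun n =>
    p n * entropyBE (w n / p n) - (w n * (z.1 + σ n * z.2) - hBEterm p σ z n)
  have hdefect_nonneg : ∀ n, 0 ≤ defect n := fun n =>
    sub_nonneg.2 (mul_sub_mul_conjBE_le (hp n) (hw.1 n) (hz n))
  have hdefect_sum : HasSum defect 0 := by
    rw [hasSum_iff_tendsto_nat_of_nonneg hdefect_nonneg]
    have h0 := (tendsto_of_serSum_coe_eq_coe h).sub (tendsto_sum_lagrangian hw hA)
    rw [sub_self] at h0
    exact h0.congr fun N => (sum_sub_distrib _ _).symm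
  funext n
  refine eq_of_mul_entropyBE_eq (hp n) (hw.1 n) (hz n) (sub_eq_zero.1 ?_)
  exact congrFun ((hasSum_zero_iff_of_nonneg hdefect_nonneg).1 hdefect_sum) n

end Duality

section Candidate

variable {p σ : ℕ → ℝ} {x y u v : ℝ}

lemma uBarBE_nonneg (hp : ∀ n, 0 ≤ p n) (hneg : ∀ n, x + σ n * y < 0) (n : ℕ) :
    0 ≤ uBarBE p σ x y n :=
  mul_nonneg (hp n)
    (div_nonneg (exp_pos _).le (by linarith [exp_lt_one_iff.2 (hneg n)]))

lemma uBarBE_mem_Sfeas (hp : ∀ n, 0 ≤ p n) (hneg : ∀ n, x + σ n * y < 0)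
    (hconv : Tendsto (fun N => ∑ k ∈ range N,
        (p k * (exp (x + σ k * y) / (1 - exp (x + σ k * y)))) • ((1 : ℝ), σ k))
      atTop (𝓝 (u, v))) :
    uBarBE p σ x y ∈ Sfeas σ u v := by
  refine ⟨uBarBE_nonneg hp hneg, ?_, ?_⟩
  · simpa [Prod.fst_sum, uBarBE] using hconv.fst_nhds
  · refine hconv.snd_nhds.congr fun N => ?_
    simp only [Prod.snd_sum, Prod.smul_snd, smul_eq_mul, uBarBE, mul_comm]

lemma summable_hBEterm_of_mem_Sfeas (hp : ∀ n, 0 ≤ p n) (hneg : ∀ n, x + σ n * y < 0)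
    (hfeas : uBarBE p σ x y ∈ Sfeas σ u v) : Summable (hBEterm p σ (x, y)) := by
  have hbar : Summable (uBarBE p σ x y) :=
    ((hasSum_iff_tendsto_nat_of_nonneg hfeas.1 u).2 hfeas.2.1).summable
  exact hbar.of_nonneg_of_le (hBEterm_nonneg hp hneg) fun n =>
    mul_le_mul_of_nonneg_left (conjBE_le (hneg n)) (hp n)

lemma serSum_uBarBE_eq (hp : ∀ n, 0 < p n) (hneg : ∀ n, x + σ n * y < 0)
    (hfeas : uBarBE p σ x y ∈ Sfeas σ u v) {A : ℝ} (hA : HasSum (hBEterm p σ (x, y)) A) :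
    serSum (fun n => (p n : EReal) * EBEe (uBarBE p σ x y n / p n)) = (u * x + v * y - A : ℝ) := by
  rw [serSum_EBEe_eq hp hfeas.1]
  refine serSum_coe_of_tendsto ((tendsto_sum_lagrangian hfeas hA).congr fun N =>
    sum_congr rfl fun n _ => ?_)
  exact (mul_entropyBE_eq (hp n).ne' (hneg n)).symm

end Candidate

theorem stmt15 (p σ : ℕ → ℝ) (hp : ∀ n, 1 ≤ p n) (x y : ℝ)
    (hneg : ∀ n, x + σ n * y < 0) (u v : ℝ)
    (hconv : Tendsto (fun N => ∑ k ∈ Finset.range N,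
        (p k * (Real.exp (x + σ k * y) / (1 - Real.exp (x + σ k * y)))) • ((1 : ℝ), σ k))
      atTop (nhds (u, v))) :
    uBarBE p σ x y ∈ Sfeas σ u v ∧
    serSum (fun n => (p n : EReal) * EBEe (uBarBE p σ x y n / p n)) = hBEstar p σ u v ∧
    Hval p σ EBEe u v = hBEstar p σ u v ∧
    (∀ w ∈ Sfeas σ u v,
      hBEstar p σ u v ≤ serSum fun n => (p n : EReal) * EBEe (w n / p n)) ∧
    (∀ w ∈ Sfeas σ u v,
      serSum (fun n => (p n : EReal) * EBEe (w n / p n)) = hBEstar p σ u v →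
        w = uBarBE p σ x y) := by
  have hp_pos : ∀ n, 0 < p n := fun n => one_pos.trans_le (hp n)
  have hp_nonneg : ∀ n, 0 ≤ p n := fun n => (hp_pos n).le
  have hfeas := uBarBE_mem_Sfeas hp_nonneg hneg hconv
  have hA := (summable_hBEterm_of_mem_Sfeas hp_nonneg hneg hfeas).hasSum
  have hval := serSum_uBarBE_eq hp_pos hneg hfeas hA
  have hstar : hBEstar p σ u v = (u * x + v * y - ∑' n, hBEterm p σ (x, y) n : ℝ) := by
    refine le_antisymm (hval ▸ hBEstar_le_serSum hp_pos hfeas) ?_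
    calc ((u * x + v * y - ∑' n, hBEterm p σ (x, y) n : ℝ) : EReal)
        = ((u * (x, y).1 + v * (x, y).2 : ℝ) : EReal) - ((hBEe p σ (x, y) : ℝ≥0∞) : EReal) := by
          rw [coe_hBEe_eq hp_nonneg hneg hA, EReal.coe_sub]
      _ ≤ hBEstar p σ u v := le_iSup (fun z : ℝ × ℝ =>
          ((u * z.1 + v * z.2 : ℝ) : EReal) - ((hBEe p σ z : ℝ≥0∞) : EReal)) (x, y)
  have hopt := hval.trans hstar.symm
  refine ⟨hfeas, hopt, ?_, fun w hw => hBEstar_le_serSum hp_pos hw,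
    fun w hw h => eq_uBarBE_of_serSum_eq hp_pos hneg hw hA (h.trans hstar)⟩
  exact Hval_eq_hBEstar_of_serSum_eq hp_pos hfeas hopt
end

section
/- Let (p_n)_{n≥1} ⊆ [1,∞) and (σ_n)_{n≥1} ⊆ (0,∞) with σ_n → ∞; assume dom f ≠ ∅ where f(y) := Σ_{n≥1} p_n e^{σ_n y}, and let α ∈ [0,∞) satisfy I := (−∞,−α) ⊆ dom f ⊆ (−∞,−α]. Set h(x,y) := e^x f(y), θ_1 := min_n σ_n, and θ_2 := lim_{y↑−α} f'(y)/f(y) ∈ (θ_1, ∞]. Then: (i) h is differentiable at every (x,y) ∈ ℝ × I with ∇h(x,y) = Σ_{n≥1} p_n e^{x+σ_n y}·(1,σ_n), and ∇h(ℝ × I) = {(u,v) ∈ ℝ² : u > 0, θ_1 u < v < θ_2 u}. (ii) θ_2 < ∞ iff (−α ∈ dom f and γ := Σ_{n≥1} p_n σ_n e^{−σ_n α} < ∞). (iii) If −α ∈ dom f and γ < ∞, then for every x ∈ ℝ the series Σ_{n≥1} p_n e^{x−σ_n α}·(1,σ_n) converges to e^x·(f(−α), γ) and ∂h(x,−α)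 = {e^x f(−α)} × [e^x γ, ∞). -/
open Filter
open scoped ENNReal

/-- `h(x,y) = Σ_n p_n e^{x+σ_n y} = e^x f(y) ∈ (0,+∞]`. -/
noncomputable def hMBe (p σ : ℕ → ℝ) (z : ℝ × ℝ) : ℝ≥0∞ :=
  ∑' n, ENNReal.ofReal (p n * Real.exp (z.1 + σ n * z.2))

/-!
On `I = (-∞, c)` every series `Σ p_n σ_n^k e^{σ_n y}` is dominated near `y` by the series at a
larger point of the domain, so `f` may be differentiated termwise. The ratio `f'/f` is strictly
increasing, since `f'' f - f'^2 = f · Σ p_n (σ_n - f'/f)^2 e^{σ_n y} > 0`; it tends to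
`θ₁ = min σ` at `-∞` and to `θ₂` at `c`, so by the intermediate value theorem the gradients
`e^x (f, f')` fill the cone `θ₁ u < v < θ₂ u`. If `θ₂ < ∞`, then `(log f)' ≤ θ₂` keeps `f` and
`f' ≤ θ₂ f` bounded on `I`, and the partial sums pass to the limit at `c`; conversely `f' ≤ γ` and
`f ≥ f(y₀)` bound `f'/f`. At `(x, c)` all subgradient inequalities follow termwise from
`e^u (1 + v - u) ≤ e^v`; a subgradient `(u, v)` has `u = e^x f(c)` because `h` is differentiable
in `x`, and `v ≥ e^x f'(y)` for every `y < c`, hence `v ≥ e^x γ`.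
-/

open Set Topology

section ExpSeries

variable {a σ : ℕ → ℝ}

theorem exp_mul_one_add_sub_le (u v : ℝ) : Real.exp u * (1 + (v - u)) ≤ Real.exp v := by
  calc Real.exp u * (1 + (v - u)) ≤ Real.exp u * Real.exp (v - u) := by
        gcongr; linarith [Real.add_one_le_exp (v - u)]
    _ = Real.exp v := by rw [← Real.exp_add, add_sub_cancel]

theorem mul_sub_mul_exp_le_exp (s y y' : ℝ) :
    s * (y' - y) * Real.exp (s * y) ≤ Real.exp (s * y') := by
  have := exp_mul_one_add_sub_le (s * y) (s * y')
  nlinarith [Real.exp_pos (s * y)]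

theorem mul_exp_le_mul_exp (ha : ∀ n, 0 ≤ a n) (hσ : ∀ n, 0 ≤ σ n) {y y' : ℝ} (h : y ≤ y')
    (n : ℕ) : a n * Real.exp (σ n * y) ≤ a n * Real.exp (σ n * y') :=
  mul_le_mul_of_nonneg_left (Real.exp_le_exp.2 (mul_le_mul_of_nonneg_left h (hσ n))) (ha n)

theorem summable_mul_exp_of_le (ha : ∀ n, 0 ≤ a n) (hσ : ∀ n, 0 ≤ σ n) {y y' : ℝ} (h : y ≤ y')
    (hs : Summable fun n => a n * Real.exp (σ n * y')) :
    Summable fun n => a n * Real.exp (σ n * y) :=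
  hs.of_nonneg_of_le (fun n => mul_nonneg (ha n) (Real.exp_pos _).le) (mul_exp_le_mul_exp ha hσ h)

theorem summable_mul_mul_exp_of_lt (ha : ∀ n, 0 ≤ a n) (hσ : ∀ n, 0 ≤ σ n) {y y' : ℝ}
    (h : y < y') (hs : Summable fun n => a n * Real.exp (σ n * y')) :
    Summable fun n => a n * σ n * Real.exp (σ n * y) := by
  have hδ : 0 < y' - y := sub_pos.2 h
  refine (hs.mul_left (y' - y)⁻¹).of_nonneg_of_le
    (fun n => mul_nonneg (mul_nonneg (ha n) (hσ n)) (Real.exp_pos _).le) fun n => ?_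
  rw [le_inv_mul_iff₀ hδ]
  calc (y' - y) * (a n * σ n * Real.exp (σ n * y))
      = a n * (σ n * (y' - y) * Real.exp (σ n * y)) := by ring
    _ ≤ a n * Real.exp (σ n * y') :=
      mul_le_mul_of_nonneg_left (mul_sub_mul_exp_le_exp _ _ _) (ha n)

theorem hasDerivAt_tsum_mul_exp (ha : ∀ n, 0 ≤ a n) (hσ : ∀ n, 0 ≤ σ n) {y y' : ℝ}
    (h : y < y') (hs : Summable fun n => a n * Real.exp (σ n * y')) :
    HasDerivAt (fun z => ∑' n, a n * Real.exp (σ n * z))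
      (∑' n, a n * σ n * Real.exp (σ n * y)) y := by
  obtain ⟨m, hym, hmy'⟩ := exists_between h
  refine hasDerivAt_tsum_of_isPreconnected (g := fun n z => a n * Real.exp (σ n * z))
    (g' := fun n z => a n * σ n * Real.exp (σ n * z)) (summable_mul_mul_exp_of_lt ha hσ hmy' hs)
    isOpen_Iio isPreconnected_Iio (fun n z _ => ?_) (fun n z hz => ?_) hym
    (summable_mul_exp_of_le ha hσ h.le hs) hym
  · exact (((hasDerivAt_id z).const_mul (σ n)).exp.const_mul (a n)).congr_deriv
      (by simp only [id, mul_one]; ring)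
  · rw [Real.norm_of_nonneg (mul_nonneg (mul_nonneg (ha n) (hσ n)) (Real.exp_pos _).le)]
    exact mul_exp_le_mul_exp (fun n => mul_nonneg (ha n) (hσ n)) hσ (le_of_lt hz) n

theorem continuousOn_tsum_mul_exp (ha : ∀ n, 0 ≤ a n) (hσ : ∀ n, 0 ≤ σ n) {c : ℝ}
    (hs : Summable fun n => a n * Real.exp (σ n * c)) :
    ContinuousOn (fun z => ∑' n, a n * Real.exp (σ n * z)) (Iic c) :=
  continuousOn_tsum (fun n => by fun_prop) hs fun n z hz => by
    rw [Real.norm_of_nonneg (mul_nonneg (ha n) (Real.exp_pos _).le)]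
    exact mul_exp_le_mul_exp ha hσ hz n

theorem mul_exp_add_eq (a σ : ℕ → ℝ) (x y : ℝ) :
    (fun n => a n * Real.exp (x + σ n * y)) = fun n => Real.exp x * (a n * Real.exp (σ n * y)) := by
  funext n; rw [Real.exp_add]; ring

theorem summable_mul_exp_add_iff (x y : ℝ) :
    (Summable fun n => a n * Real.exp (x + σ n * y)) ↔
      Summable fun n => a n * Real.exp (σ n * y) := by
  rw [mul_exp_add_eq, summable_mul_left_iff (Real.exp_pos x).ne']

theorem tsum_mul_exp_add (a σ : ℕ → ℝ) (x y : ℝ) :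
    ∑' n, a n * Real.exp (x + σ n * y) = Real.exp x * ∑' n, a n * Real.exp (σ n * y) := by
  rw [mul_exp_add_eq, tsum_mul_left]

end ExpSeries

noncomputable def fDD (p σ : ℕ → ℝ) (y : ℝ) : ℝ := ∑' n, p n * σ n * σ n * Real.exp (σ n * y)

section Moments

variable {p σ : ℕ → ℝ} {c y : ℝ}

theorem fR_pos (hp : ∀ n, 0 < p n) (hy : y ∈ fDom p σ) : 0 < fR p σ y :=
  hy.tsum_pos (fun n => (mul_pos (hp n) (Real.exp_pos _)).le) 0 (mul_pos (hp 0) (Real.exp_pos _))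

theorem fD_nonneg (hp : ∀ n, 0 ≤ p n) (hσ : ∀ n, 0 ≤ σ n) (y : ℝ) : 0 ≤ fD p σ y :=
  tsum_nonneg fun n => mul_nonneg (mul_nonneg (hp n) (hσ n)) (Real.exp_pos _).le

theorem fR_mono (hp : ∀ n, 0 ≤ p n) (hσ : ∀ n, 0 ≤ σ n) {y y' : ℝ} (h : y ≤ y')
    (hy' : y' ∈ fDom p σ) : fR p σ y ≤ fR p σ y' :=
  (summable_mul_exp_of_le hp hσ h hy').tsum_le_tsum (mul_exp_le_mul_exp hp hσ h) hy'

theorem fD_mono (hp : ∀ n, 0 ≤ p n) (hσ : ∀ n, 0 ≤ σ n) {y y' : ℝ} (h : y ≤ y')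
    (hy' : Summable fun n => p n * σ n * Real.exp (σ n * y')) : fD p σ y ≤ fD p σ y' :=
  have hpσ n : 0 ≤ p n * σ n := mul_nonneg (hp n) (hσ n)
  (summable_mul_exp_of_le hpσ hσ h hy').tsum_le_tsum (mul_exp_le_mul_exp hpσ hσ h) hy'

theorem summable_fD_of_lt (hp : ∀ n, 0 ≤ p n) (hσ : ∀ n, 0 ≤ σ n) (hI : Iio c ⊆ fDom p σ)
    (hy : y < c) : Summable fun n => p n * σ n * Real.exp (σ n * y) :=
  have ⟨_, hym, hmc⟩ := exists_between hy
  summable_mul_mul_exp_of_lt hp hσ hym (hI hmc)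

theorem summable_fDD_of_lt (hp : ∀ n, 0 ≤ p n) (hσ : ∀ n, 0 ≤ σ n) (hI : Iio c ⊆ fDom p σ)
    (hy : y < c) : Summable fun n => p n * σ n * σ n * Real.exp (σ n * y) :=
  have ⟨_, hym, hmc⟩ := exists_between hy
  summable_mul_mul_exp_of_lt (fun n => mul_nonneg (hp n) (hσ n)) hσ hym
    (summable_fD_of_lt hp hσ hI hmc)

theorem hasDerivAt_fR (hp : ∀ n, 0 ≤ p n) (hσ : ∀ n, 0 ≤ σ n) (hI : Iio c ⊆ fDom p σ)
    (hy : y < c) : HasDerivAt (fR p σ) (fD p σ y) y :=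
  have ⟨_, hym, hmc⟩ := exists_between hy
  hasDerivAt_tsum_mul_exp hp hσ hym (hI hmc)

theorem hasDerivAt_fD (hp : ∀ n, 0 ≤ p n) (hσ : ∀ n, 0 ≤ σ n) (hI : Iio c ⊆ fDom p σ)
    (hy : y < c) :
    HasDerivAt (fD p σ) (fDD p σ y) y :=
  have ⟨_, hym, hmc⟩ := exists_between hy
  hasDerivAt_tsum_mul_exp (fun n => mul_nonneg (hp n) (hσ n)) hσ hym
    (summable_fD_of_lt hp hσ hI hmc)

/-- The subgradient inequality of the convex function `(x, y) ↦ e^x f(y)`. -/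
theorem exp_mul_fR_add_le (hp : ∀ n, 0 ≤ p n) {y y' : ℝ} (hy : y ∈ fDom p σ)
    (hy' : y' ∈ fDom p σ) (hD : Summable fun n => p n * σ n * Real.exp (σ n * y)) (x x' : ℝ) :
    Real.exp x * fR p σ y + (Real.exp x * fR p σ y * (x' - x) + Real.exp x * fD p σ y * (y' - y))
      ≤ Real.exp x' * fR p σ y' := by
  have hL := (hy.hasSum.mul_left (Real.exp x * (1 + (x' - x)))).add
    (hD.hasSum.mul_left (Real.exp x * (y' - y)))
  have hR := hy'.hasSum.mul_left (Real.exp x')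
  have key := hasSum_le (fun n => ?_) hL hR
  · unfold fR fD; linarith
  · have := mul_le_mul_of_nonneg_left
      (exp_mul_one_add_sub_le (x + σ n * y) (x' + σ n * y')) (hp n)
    simp only [Real.exp_add] at this
    linarith

/-- `f'' f - f'^2 = f · Σ p_n (σ_n - f'/f)^2 e^{σ_n y}`, a variance, positive as `σ` is not
constant. -/
theorem fD_mul_fD_lt (hp : ∀ n, 0 < p n) (hσ : ∀ n, 0 ≤ σ n) (hσc : ∀ m, ∃ n, σ n ≠ m)
    (hI : Iio c ⊆ fDom p σ) (hy : y < c) :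
    fD p σ y * fD p σ y < fDD p σ y * fR p σ y := by
  have hp0 n := (hp n).le
  have hR := fR_pos hp (hI hy)
  set m := fD p σ y / fR p σ y
  set S := fDD p σ y - 2 * m * fD p σ y + m ^ 2 * fR p σ y
  have hS : HasSum (fun n => p n * (σ n - m) ^ 2 * Real.exp (σ n * y)) S := by
    refine (((summable_fDD_of_lt hp0 hσ hI hy).hasSum.sub
      ((summable_fD_of_lt hp0 hσ hI hy).hasSum.mul_left (2 * m))).add
      ((hI hy).hasSum.mul_left (m ^ 2))).congr_fun fun n => ?_
    ring
  obtain ⟨n₁, hn₁⟩ := hσc m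
  have hSpos : 0 < S := hasSum_lt (f := 0) (i := n₁)
    (fun n => by have := hp n; simp only [Pi.zero_apply]; positivity)
    (by have := hp n₁; have := sub_ne_zero.2 hn₁; simp only [Pi.zero_apply]; positivity)
    hasSum_zero hS
  have hm : m * fR p σ y = fD p σ y := div_mul_cancel₀ _ hR.ne'
  have : fR p σ y * S = fDD p σ y * fR p σ y - fD p σ y * fD p σ y := by
    simp only [S, ← hm]; ring
  nlinarith [mul_pos hR hSpos]

theorem hasDerivAt_fD_div_fR (hp : ∀ n, 0 < p n) (hσ : ∀ n, 0 ≤ σ n) (hI : Iio c ⊆ fDom p σ)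
    (hy : y < c) :
    HasDerivAt (fun y => fD p σ y / fR p σ y)
      ((fDD p σ y * fR p σ y - fD p σ y * fD p σ y) / fR p σ y ^ 2) y :=
  have hp0 n := (hp n).le
  (hasDerivAt_fD hp0 hσ hI hy).div (hasDerivAt_fR hp0 hσ hI hy) (fR_pos hp (hI hy)).ne'

theorem continuousOn_fD_div_fR (hp : ∀ n, 0 < p n) (hσ : ∀ n, 0 ≤ σ n)
    (hI : Iio c ⊆ fDom p σ) : ContinuousOn (fun y => fD p σ y / fR p σ y) (Iio c) :=
  fun _ hy => (hasDerivAt_fD_div_fR hp hσ hI hy).continuousAt.continuousWithinAt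

theorem strictMonoOn_fD_div_fR (hp : ∀ n, 0 < p n) (hσ : ∀ n, 0 ≤ σ n)
    (hσc : ∀ m, ∃ n, σ n ≠ m) (hI : Iio c ⊆ fDom p σ) :
    StrictMonoOn (fun y => fD p σ y / fR p σ y) (Iio c) := by
  refine strictMonoOn_of_deriv_pos (convex_Iio c) (continuousOn_fD_div_fR hp hσ hI) fun y hy => ?_
  rw [interior_Iio] at hy
  rw [(hasDerivAt_fD_div_fR hp hσ hI hy).deriv]
  have := fD_mul_fD_lt hp hσ hσc hI hy
  have := fR_pos hp (hI hy)
  apply div_pos <;> nlinarith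

theorem mul_fR_lt_fD (hp : ∀ n, 0 < p n) {θ : ℝ} (hθ : ∀ n, θ ≤ σ n) (hθ' : ∃ n, σ n ≠ θ)
    (hy : y ∈ fDom p σ) (hD : Summable fun n => p n * σ n * Real.exp (σ n * y)) :
    θ * fR p σ y < fD p σ y := by
  obtain ⟨n₁, hn₁⟩ := hθ'
  have hS : HasSum (fun n => p n * (σ n - θ) * Real.exp (σ n * y)) (fD p σ y - θ * fR p σ y) := by
    refine (hD.hasSum.sub (hy.hasSum.mul_left θ)).congr_fun fun n => ?_
    ring
  have hpos : 0 < fD p σ y - θ * fR p σ y := hasSum_lt (f := 0) (i := n₁)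
    (fun n => mul_nonneg (mul_nonneg (hp n).le (sub_nonneg.2 (hθ n))) (Real.exp_pos _).le)
    (mul_pos (mul_pos (hp n₁) (sub_pos.2 ((hθ n₁).lt_of_ne hn₁.symm))) (Real.exp_pos _))
    hasSum_zero hS
  linarith

end Moments

theorem isLeast_sInf_range_of_tendsto {σ : ℕ → ℝ} (h : Tendsto σ atTop atTop) :
    IsLeast (range σ) (sInf (range σ)) := by
  obtain ⟨n₀, hn₀⟩ := (Nat.cofinite_eq_atTop ▸ h).exists_forall_le
  have hL : IsLeast (range σ) (σ n₀) := ⟨mem_range_self n₀, forall_mem_range.2 hn₀⟩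
  rwa [hL.csInf_eq]

theorem coe_lt_mul_coe_iff {a b : ℝ} (ha : 0 < a) {θ : EReal} :
    (b : EReal) < θ * a ↔ ((b / a : ℝ) : EReal) < θ := by
  rw [EReal.coe_div, EReal.div_lt_iff (EReal.coe_pos.2 ha) (EReal.coe_ne_top a)]

section Ratio

variable {p σ : ℕ → ℝ} {c y : ℝ}

theorem fD_sub_mul_fR_eq (hy : y ∈ fDom p σ)
    (hD : Summable fun n => p n * σ n * Real.exp (σ n * y)) (θ : ℝ) :
    fD p σ y - θ * fR p σ y = fD p (fun n => σ n - θ) y * Real.exp (θ * y) := by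
  rw [fD, fD, fR, ← tsum_mul_right, ← tsum_mul_left, ← hD.tsum_sub (hy.mul_left θ)]
  refine tsum_congr fun n => ?_
  have : Real.exp ((σ n - θ) * y) * Real.exp (θ * y) = Real.exp (σ n * y) := by
    rw [← Real.exp_add]; ring_nf
  linear_combination (-(p n * (σ n - θ))) * this

theorem tendsto_fD_atBot (hp : ∀ n, 0 ≤ p n) (hσ : ∀ n, 0 ≤ σ n) {y₀ : ℝ}
    (hs : Summable fun n => p n * σ n * Real.exp (σ n * y₀)) :
    Tendsto (fD p σ) atBot (𝓝 0) := by
  have hpσ n : 0 ≤ p n * σ n := mul_nonneg (hp n) (hσ n)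
  have hterm n : Tendsto (fun y => p n * σ n * Real.exp (σ n * y)) atBot (𝓝 0) := by
    rcases (hσ n).eq_or_lt with h | h
    · simp [← h]
    · simpa using
        (Real.tendsto_exp_atBot.comp (tendsto_id.const_mul_atBot h)).const_mul (p n * σ n)
  have hbound : ∀ᶠ y in atBot, ∀ n, ‖p n * σ n * Real.exp (σ n * y)‖
      ≤ p n * σ n * Real.exp (σ n * y₀) := by
    filter_upwards [eventually_le_atBot y₀] with y hy n
    rw [Real.norm_of_nonneg (mul_nonneg (hpσ n) (Real.exp_pos _).le)]
    exact mul_exp_le_mul_exp hpσ hσ hy n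
  have h := tendsto_tsum_of_dominated_convergence hs hterm hbound
  rw [tsum_zero] at h
  exact h

/-- With `θ₁ = σ n₀` the least exponent, `f'/f - θ₁` is the log-derivative ratio for the
exponents `σ - θ₁`, scaled by `e^{θ₁ y} / f(y) ≤ 1 / p n₀`. -/
theorem tendsto_fD_div_fR_atBot (hp : ∀ n, 0 < p n) (hσ : ∀ n, 0 ≤ σ n)
    (hσtop : Tendsto σ atTop atTop) (hI : Iio c ⊆ fDom p σ) :
    Tendsto (fun y => fD p σ y / fR p σ y) atBot (𝓝 (sInf (range σ))) := by
  have hp0 n := (hp n).le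
  obtain ⟨⟨n₀, hn₀⟩, hθ⟩ := isLeast_sInf_range_of_tendsto hσtop
  rw [← hn₀] at hθ ⊢
  have hσ' n : 0 ≤ σ n - σ n₀ := sub_nonneg.2 (hθ (mem_range_self n))
  obtain ⟨y₁, hy₁⟩ := exists_lt c
  obtain ⟨y₀, hy₀⟩ := exists_lt y₁
  have hs₀ : Summable fun n => p n * (σ n - σ n₀) * Real.exp ((σ n - σ n₀) * y₀) := by
    refine summable_mul_mul_exp_of_lt hp0 hσ' hy₀ ?_
    simp only [sub_mul, Real.exp_sub, ← mul_div_assoc]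
    exact (hI hy₁).div_const _
  have hlim := ((tendsto_fD_atBot hp0 hσ' hs₀).div_const (p n₀)).const_add (σ n₀)
  rw [zero_div, add_zero] at hlim
  have hbounds y (hy : y < c) : σ n₀ ≤ fD p σ y / fR p σ y ∧
      fD p σ y / fR p σ y ≤ σ n₀ + fD p (fun n => σ n - σ n₀) y / p n₀ := by
    have hR := fR_pos hp (hI hy)
    have key := fD_sub_mul_fR_eq (hI hy) (summable_fD_of_lt hp0 hσ hI hy) (σ n₀)
    have hN := fD_nonneg hp0 hσ' y
    have hmin : p n₀ * Real.exp (σ n₀ * y) ≤ fR p σ y :=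
      (hI hy).le_tsum n₀ fun n _ => (mul_pos (hp n) (Real.exp_pos _)).le
    refine ⟨by rw [le_div_iff₀ hR]; nlinarith [Real.exp_pos (σ n₀ * y)], ?_⟩
    calc fD p σ y / fR p σ y
        = σ n₀ + fD p (fun n => σ n - σ n₀) y * Real.exp (σ n₀ * y) / fR p σ y := by
          rw [← key]; field_simp; ring
      _ ≤ σ n₀ + fD p (fun n => σ n - σ n₀) y * Real.exp (σ n₀ * y)
            / (p n₀ * Real.exp (σ n₀ * y)) := by
          gcongr
          exact mul_pos (hp n₀) (Real.exp_pos _)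
      _ = σ n₀ + fD p (fun n => σ n - σ n₀) y / p n₀ := by
          rw [mul_div_mul_right _ _ (Real.exp_pos _).ne']
  exact tendsto_of_tendsto_of_tendsto_of_le_of_le' tendsto_const_nhds hlim
    ((eventually_lt_atBot c).mono fun y hy => (hbounds y hy).1)
    ((eventually_lt_atBot c).mono fun y hy => (hbounds y hy).2)

end Ratio

section Limit

variable {p σ : ℕ → ℝ} {c : ℝ} {θ₂ : EReal}

theorem coe_fD_div_fR_lt (hp : ∀ n, 0 < p n) (hσ : ∀ n, 0 ≤ σ n) (hσc : ∀ m, ∃ n, σ n ≠ m)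
    (hI : Iio c ⊆ fDom p σ)
    (hθ₂ : Tendsto (fun y => ((fD p σ y / fR p σ y : ℝ) : EReal)) (𝓝[<] c) (𝓝 θ₂))
    {y : ℝ} (hy : y < c) : ((fD p σ y / fR p σ y : ℝ) : EReal) < θ₂ := by
  obtain ⟨y', hyy', hy'c⟩ := exists_between hy
  have hmono := strictMonoOn_fD_div_fR hp hσ hσc hI
  refine (EReal.coe_lt_coe_iff.2 (hmono hy hy'c hyy')).trans_le (ge_of_tendsto hθ₂ ?_)
  filter_upwards [Ioo_mem_nhdsLT hy'c] with z hz
  exact EReal.coe_le_coe_iff.2 ((hmono.le_iff_le hy'c hz.2).2 hz.1.le)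

theorem exists_fD_div_fR_eq (hp : ∀ n, 0 < p n) (hσ : ∀ n, 0 ≤ σ n)
    (hσtop : Tendsto σ atTop atTop) (hI : Iio c ⊆ fDom p σ)
    (hθ₂ : Tendsto (fun y => ((fD p σ y / fR p σ y : ℝ) : EReal)) (𝓝[<] c) (𝓝 θ₂))
    {t : ℝ} (ht₁ : sInf (range σ) < t) (ht₂ : (t : EReal) < θ₂) :
    ∃ y < c, fD p σ y / fR p σ y = t := by
  obtain ⟨y₁, hy₁, hy₁c⟩ := (((tendsto_fD_div_fR_atBot hp hσ hσtop hI).eventually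
    (eventually_lt_nhds ht₁)).and (eventually_lt_atBot c)).exists
  obtain ⟨y₂, hy₂, hy₂c⟩ :=
    ((hθ₂.eventually (eventually_gt_nhds ht₂)).and self_mem_nhdsWithin).exists
  have hsub : uIcc y₁ y₂ ⊆ Iio c := ordConnected_Iio.uIcc_subset hy₁c hy₂c
  obtain ⟨y, hy, hyt⟩ := intermediate_value_uIcc ((continuousOn_fD_div_fR hp hσ hI).mono hsub)
    (mem_uIcc.2 (Or.inl ⟨hy₁.le, (EReal.coe_lt_coe_iff.1 hy₂).le⟩))
  exact ⟨y, hsub hy, hyt⟩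

theorem image_exp_mul_fR_fD (hp : ∀ n, 0 < p n) (hσ : ∀ n, 0 ≤ σ n)
    (hσtop : Tendsto σ atTop atTop) (hI : Iio c ⊆ fDom p σ)
    (hθ₂ : Tendsto (fun y => ((fD p σ y / fR p σ y : ℝ) : EReal)) (𝓝[<] c) (𝓝 θ₂)) :
    (fun z : ℝ × ℝ => (Real.exp z.1 * fR p σ z.2, Real.exp z.1 * fD p σ z.2)) ''
        (univ ×ˢ Iio c) =
      {w : ℝ × ℝ | 0 < w.1 ∧ sInf (range σ) * w.1 < w.2 ∧
        ((w.2 : ℝ) : EReal) < θ₂ * ((w.1 : ℝ) : EReal)} := by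
  have hσc m : ∃ n, σ n ≠ m := (hσtop.eventually_ne_atTop m).exists
  have hθ₁ := isLeast_sInf_range_of_tendsto hσtop
  ext ⟨u, v⟩
  simp only [mem_image, mem_prod, mem_univ, true_and, mem_Iio, Prod.exists, Prod.mk.injEq,
    mem_ofPred_eq]
  constructor
  · rintro ⟨x, y, hy, rfl, rfl⟩
    have hR := fR_pos hp (hI hy)
    have hu : 0 < Real.exp x * fR p σ y := by positivity
    refine ⟨hu, ?_, ?_⟩
    · rw [mul_left_comm]
      exact mul_lt_mul_of_pos_left (mul_fR_lt_fD hp (fun n => hθ₁.2 (mem_range_self n))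
        (hσc _) (hI hy) (summable_fD_of_lt (fun n => (hp n).le) hσ hI hy)) (Real.exp_pos x)
    · rw [coe_lt_mul_coe_iff hu, mul_div_mul_left _ _ (Real.exp_pos x).ne']
      exact coe_fD_div_fR_lt hp hσ hσc hI hθ₂ hy
  · rintro ⟨hu, hv₁, hv₂⟩
    rw [coe_lt_mul_coe_iff hu] at hv₂
    obtain ⟨y, hy, hyt⟩ := exists_fD_div_fR_eq hp hσ hσtop hI hθ₂ (t := v / u)
      (by rwa [lt_div_iff₀ hu]) hv₂
    have hR := fR_pos hp (hI hy)
    refine ⟨Real.log (u / fR p σ y), y, hy, ?_, ?_⟩ <;> rw [Real.exp_log (by positivity)]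
    · field_simp
    · rw [div_eq_div_iff hR.ne' hu.ne'] at hyt
      field_simp
      linarith

end Limit

theorem summable_of_tendsto_of_tsum_le {α ι : Type*} {l : Filter α} [l.NeBot] {a : ι → α → ℝ}
    {b : ι → ℝ} {M : ℝ} (hb : ∀ i, 0 ≤ b i) (ha : ∀ i, Tendsto (a i) l (𝓝 (b i)))
    (hM : ∀ᶠ y in l, (∀ i, 0 ≤ a i y) ∧ Summable (fun i => a i y) ∧ ∑' i, a i y ≤ M) :
    Summable b :=
  summable_of_sum_le hb fun s => le_of_tendsto (tendsto_finsetSum s fun i _ => ha i)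
    (hM.mono fun _ ⟨h0, hs, hle⟩ => (hs.sum_le_tsum s fun i _ => h0 i).trans hle)

section Boundary

variable {p σ : ℕ → ℝ} {c : ℝ} {θ₂ : EReal}

theorem lt_top_of_summable_fD (hp : ∀ n, 0 < p n) (hσ : ∀ n, 0 ≤ σ n) (hI : Iio c ⊆ fDom p σ)
    (hθ₂ : Tendsto (fun y => ((fD p σ y / fR p σ y : ℝ) : EReal)) (𝓝[<] c) (𝓝 θ₂))
    (hD : Summable fun n => p n * σ n * Real.exp (σ n * c)) : θ₂ < ⊤ := by
  have hp0 n := (hp n).le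
  obtain ⟨y₀, hy₀⟩ := exists_lt c
  refine (le_of_tendsto hθ₂ ?_).trans_lt (EReal.coe_lt_top (fD p σ c / fR p σ y₀))
  filter_upwards [Ioo_mem_nhdsLT hy₀] with y hy
  exact EReal.coe_le_coe_iff.2 (div_le_div₀ (fD_nonneg hp0 hσ c) (fD_mono hp0 hσ hy.2.le hD)
    (fR_pos hp (hI hy₀)) (fR_mono hp0 hσ hy.1.le (hI hy.2)))

theorem fR_le_of_fD_le_mul (hp : ∀ n, 0 < p n) (hσ : ∀ n, 0 ≤ σ n) (hI : Iio c ⊆ fDom p σ)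
    {B : ℝ} (hB : ∀ y < c, fD p σ y ≤ B * fR p σ y) {y₀ y : ℝ} (hy₀ : y₀ ≤ y) (hy : y < c) :
    fR p σ y ≤ fR p σ y₀ * Real.exp (B * (y - y₀)) := by
  have hderiv z (hz : z < c) : HasDerivAt (fun z => Real.log (fR p σ z)) (fD p σ z / fR p σ z) z :=
    (hasDerivAt_fR (fun n => (hp n).le) hσ hI hz).log (fR_pos hp (hI hz)).ne'
  have hlog := (convex_Iio c).image_sub_le_mul_sub_of_deriv_le
    (fun z hz => (hderiv z hz).continuousAt.continuousWithinAt)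
    (fun z hz => (hderiv z (by rwa [interior_Iio] at hz)).differentiableAt.differentiableWithinAt)
    (fun z hz => by
      rw [interior_Iio] at hz
      rw [(hderiv z hz).deriv, div_le_iff₀ (fR_pos hp (hI hz))]
      exact hB z hz)
    y₀ (hy₀.trans_lt hy) y hy hy₀
  rw [sub_le_iff_le_add, Real.log_le_iff_le_exp (fR_pos hp (hI hy)), Real.exp_add,
    Real.exp_log (fR_pos hp (hI (hy₀.trans_lt hy)))] at hlog
  linarith [mul_comm (Real.exp (B * (y - y₀))) (fR p σ y₀)]

theorem summable_of_lt_top (hp : ∀ n, 0 < p n) (hσ : ∀ n, 0 ≤ σ n) (hσc : ∀ m, ∃ n, σ n ≠ m)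
    (hI : Iio c ⊆ fDom p σ)
    (hθ₂ : Tendsto (fun y => ((fD p σ y / fR p σ y : ℝ) : EReal)) (𝓝[<] c) (𝓝 θ₂))
    (htop : θ₂ < ⊤) :
    c ∈ fDom p σ ∧ Summable fun n => p n * σ n * Real.exp (σ n * c) := by
  have hp0 n := (hp n).le
  obtain ⟨B, hθB, -⟩ := EReal.exists_between_coe_real htop
  have hB y (hy : y < c) : fD p σ y ≤ B * fR p σ y := by
    have := (coe_fD_div_fR_lt hp hσ hσc hI hθ₂ hy).trans hθB
    rw [EReal.coe_lt_coe_iff, div_lt_iff₀ (fR_pos hp (hI hy))] at this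
    exact this.le
  obtain ⟨y₀, hy₀⟩ := exists_lt c
  have hR₀ := fR_pos hp (hI hy₀)
  have hB₀ : 0 ≤ B := nonneg_of_mul_nonneg_left ((fD_nonneg hp0 hσ y₀).trans (hB y₀ hy₀)) hR₀
  set M := fR p σ y₀ * Real.exp (B * (c - y₀))
  have hM y (hy : y ∈ Ioo y₀ c) : fR p σ y ≤ M := by
    refine (fR_le_of_fD_le_mul hp hσ hI hB hy.1.le hy.2).trans ?_
    exact mul_le_mul_of_nonneg_left (Real.exp_le_exp.2
      (mul_le_mul_of_nonneg_left (by linarith [hy.2]) hB₀)) hR₀.le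
  have hterm (a : ℕ → ℝ) n : Tendsto (fun y => a n * Real.exp (σ n * y)) (𝓝[<] c)
      (𝓝 (a n * Real.exp (σ n * c))) :=
    (Continuous.tendsto (by fun_prop) c).mono_left nhdsWithin_le_nhds
  constructor
  · refine summable_of_tendsto_of_tsum_le (M := M)
      (fun n => mul_nonneg (hp0 n) (Real.exp_pos _).le) (hterm p) ?_
    filter_upwards [Ioo_mem_nhdsLT hy₀] with y hy
    exact ⟨fun n => mul_nonneg (hp0 n) (Real.exp_pos _).le, hI hy.2, hM y hy⟩
  · refine summable_of_tendsto_of_tsum_le (M := B * M)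
      (fun n => mul_nonneg (mul_nonneg (hp0 n) (hσ n)) (Real.exp_pos _).le)
      (hterm fun n => p n * σ n) ?_
    filter_upwards [Ioo_mem_nhdsLT hy₀] with y hy
    exact ⟨fun n => mul_nonneg (mul_nonneg (hp0 n) (hσ n)) (Real.exp_pos _).le,
      summable_fD_of_lt hp0 hσ hI hy.2, (hB y hy.2).trans (by gcongr; exact hM y hy)⟩

end Boundary

theorem eq_of_forall_add_mul_le_mul_exp {a w : ℝ} (h : ∀ t, a + w * t ≤ a * Real.exp t) :
    w = a := by
  have hmin : IsLocalMin (fun t => a * Real.exp t - w * t) 0 :=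
    Filter.Eventually.of_forall fun t => by simp only [Real.exp_zero]; linarith [h t]
  have hderiv : HasDerivAt (fun t => a * Real.exp t - w * t) (a * Real.exp 0 - w * 1) 0 :=
    ((Real.hasDerivAt_exp 0).const_mul a).sub ((hasDerivAt_id 0).const_mul w)
  have := hmin.hasDerivAt_eq_zero hderiv
  rw [Real.exp_zero] at this
  linarith

section Subdifferential

variable {p σ : ℕ → ℝ} {c : ℝ}

theorem hasSum_mul_exp_smul (hc : c ∈ fDom p σ)
    (hD : Summable fun n => p n * σ n * Real.exp (σ n * c)) (x : ℝ) :
    HasSum (fun n => (p n * Real.exp (x + σ n * c)) • ((1 : ℝ), σ n))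
      (Real.exp x * fR p σ c, Real.exp x * fD p σ c) :=
  ((hc.hasSum.mul_left (Real.exp x)).prodMk (hD.hasSum.mul_left (Real.exp x))).congr_fun
    fun n => by
      rw [Prod.smul_mk, smul_eq_mul, smul_eq_mul, Real.exp_add]
      ext <;> ring

theorem coe_hMBe_of_mem (hp : ∀ n, 0 ≤ p n) {z : ℝ × ℝ} (hz : z.2 ∈ fDom p σ) :
    (hMBe p σ z : EReal) = ((Real.exp z.1 * fR p σ z.2 : ℝ) : EReal) := by
  rw [hMBe, ← ENNReal.ofReal_tsum_of_nonneg (fun n => mul_nonneg (hp n) (Real.exp_pos _).le)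
    ((summable_mul_exp_add_iff z.1 z.2).2 hz), tsum_mul_exp_add, EReal.coe_ennreal_ofReal,
    max_eq_left (mul_nonneg (Real.exp_pos _).le
      (tsum_nonneg fun n => mul_nonneg (hp n) (Real.exp_pos _).le))]
  rfl

theorem hMBe_eq_top (hp : ∀ n, 0 ≤ p n) {z : ℝ × ℝ} (hz : z.2 ∉ fDom p σ) : hMBe p σ z = ⊤ := by
  by_contra h
  refine hz ((summable_mul_exp_add_iff z.1 z.2).1 ?_)
  exact (ENNReal.summable_toReal h).congr fun n =>
    ENNReal.toReal_ofReal (mul_nonneg (hp n) (Real.exp_pos _).le)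

theorem mem_subd2_hMBe_iff (hp : ∀ n, 0 ≤ p n) (hc : c ∈ fDom p σ) (x : ℝ) (w : ℝ × ℝ) :
    w ∈ subd2 (fun z => (hMBe p σ z : EReal)) (x, c) ↔ ∀ x' y', y' ∈ fDom p σ →
      Real.exp x * fR p σ c + (w.1 * (x' - x) + w.2 * (y' - c)) ≤ Real.exp x' * fR p σ y' := by
  simp only [subd2, mem_ofPred_eq, Prod.forall]
  refine forall₂_congr fun x' y' => ?_
  rw [coe_hMBe_of_mem hp (z := (x, c)) hc]
  by_cases hy' : y' ∈ fDom p σ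
  · rw [coe_hMBe_of_mem hp (z := (x', y')) hy', ← EReal.coe_add, EReal.coe_le_coe_iff]
    simp [hy']
  · simp [hMBe_eq_top hp (z := (x', y')) hy', hy']

theorem subd2_hMBe_eq (hp : ∀ n, 0 ≤ p n) (hσ : ∀ n, 0 ≤ σ n) (hI : Iio c ⊆ fDom p σ)
    (hdom : fDom p σ ⊆ Iic c) (hc : c ∈ fDom p σ)
    (hD : Summable fun n => p n * σ n * Real.exp (σ n * c)) (x : ℝ) :
    subd2 (fun z => (hMBe p σ z : EReal)) (x, c) =
      {Real.exp x * fR p σ c} ×ˢ Ici (Real.exp x * fD p σ c) := by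
  ext ⟨u, v⟩
  rw [mem_subd2_hMBe_iff hp hc, mem_prod, mem_singleton_iff, mem_Ici]
  constructor
  · intro hw
    refine ⟨eq_of_forall_add_mul_le_mul_exp fun t => ?_, ?_⟩
    · have := hw (x + t) c hc
      rw [Real.exp_add] at this
      linarith
    have hv y (hy : y < c) : Real.exp x * fD p σ y ≤ v := by
      have h₁ := hw x y (hI hy)
      have h₂ := exp_mul_fR_add_le hp (hI hy) hc (summable_fD_of_lt hp hσ hI hy) x x
      have : v * (y - c) ≤ Real.exp x * fD p σ y * (y - c) := by linarith
      exact (mul_le_mul_right_of_neg (sub_neg.2 hy)).1 this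
    have hcont := (continuousOn_tsum_mul_exp (fun n => mul_nonneg (hp n) (hσ n)) hσ hD c
      self_mem_Iic).mono_left (nhdsWithin_mono _ Iio_subset_Iic_self)
    exact le_of_tendsto (hcont.const_mul (Real.exp x)) (eventually_mem_nhdsWithin.mono hv)
  · rintro ⟨rfl, hv⟩ x' y' hy'
    have := exp_mul_fR_add_le hp hc hy' hD x x'
    have : v * (y' - c) ≤ Real.exp x * fD p σ c * (y' - c) :=
      mul_le_mul_of_nonpos_right hv (sub_nonpos.2 (hdom hy'))
    linarith

end Subdifferential

theorem hasFDerivAt_exp_mul_fR {p σ : ℕ → ℝ} {c : ℝ} (hp : ∀ n, 0 ≤ p n)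
    (hσ : ∀ n, 0 ≤ σ n) (hI : Iio c ⊆ fDom p σ) {x y : ℝ} (hy : y < c) :
    HasFDerivAt (fun z : ℝ × ℝ => Real.exp z.1 * fR p σ z.2)
      (gradCLM (Real.exp x * fR p σ y) (Real.exp x * fD p σ y)) (x, y) := by
  have hfst : HasFDerivAt (fun z : ℝ × ℝ => Real.exp z.1)
      (Real.exp x • ContinuousLinearMap.fst ℝ ℝ ℝ) (x, y) :=
    HasDerivAt.comp_hasFDerivAt (f := Prod.fst) (x, y) (Real.hasDerivAt_exp x) hasFDerivAt_fst
  have hsnd : HasFDerivAt (fun z : ℝ × ℝ => fR p σ z.2)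
      (fD p σ y • ContinuousLinearMap.snd ℝ ℝ ℝ) (x, y) :=
    HasDerivAt.comp_hasFDerivAt (f := Prod.snd) (x, y) (hasDerivAt_fR hp hσ hI hy) hasFDerivAt_snd
  refine (hfst.mul hsnd).congr_fderiv (ContinuousLinearMap.ext fun z => ?_)
  simp [gradCLM]
  ring

theorem stmt16_general (p σ : ℕ → ℝ) (hp : ∀ n, 1 ≤ p n) (hσpos : ∀ n, 0 < σ n)
    (hσtop : Tendsto σ atTop atTop)
    (α : ℝ) (h1 : Set.Iio (-α) ⊆ fDom p σ) (h2 : fDom p σ ⊆ Set.Iic (-α))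
    (θ₂ : EReal)
    (hθ₂ : Tendsto (fun y => ((fD p σ y / fR p σ y : ℝ) : EReal))
      (nhdsWithin (-α) (Set.Iio (-α))) (nhds θ₂)) :
    ((sInf (Set.range σ) : ℝ) : EReal) < θ₂ ∧
    (∀ x y : ℝ, y < -α →
      (Summable fun n => p n * Real.exp (x + σ n * y)) ∧
      (Summable fun n => p n * σ n * Real.exp (x + σ n * y)) ∧
      HasFDerivAt (fun z : ℝ × ℝ => Real.exp z.1 * fR p σ z.2)
        (gradCLM (∑' n, p n * Real.exp (x + σ n * y))
          (∑' n, p n * σ n * Real.exp (x + σ n * y))) (x, y)) ∧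
    ((fun z : ℝ × ℝ => ((∑' n, p n * Real.exp (z.1 + σ n * z.2)),
        (∑' n, p n * σ n * Real.exp (z.1 + σ n * z.2)))) '' (Set.univ ×ˢ Set.Iio (-α)) =
      {w : ℝ × ℝ | 0 < w.1 ∧ sInf (Set.range σ) * w.1 < w.2 ∧
        ((w.2 : ℝ) : EReal) < θ₂ * ((w.1 : ℝ) : EReal)}) ∧
    (θ₂ < ⊤ ↔
      (-α ∈ fDom p σ ∧ Summable fun n => p n * σ n * Real.exp (σ n * (-α)))) ∧
    ((-α ∈ fDom p σ ∧ (Summable fun n => p n * σ n * Real.exp (σ n * (-α)))) →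
      ∀ x : ℝ,
        Tendsto (fun N => ∑ k ∈ Finset.range N,
            (p k * Real.exp (x - σ k * α)) • ((1 : ℝ), σ k)) atTop
          (nhds (Real.exp x * fR p σ (-α), Real.exp x * fD p σ (-α))) ∧
        subd2 (fun z => ((hMBe p σ z : ℝ≥0∞) : EReal)) (x, -α) =
          {Real.exp x * fR p σ (-α)} ×ˢ Set.Ici (Real.exp x * fD p σ (-α))) := by
  have hp' n : 0 < p n := one_pos.trans_le (hp n)
  have hp0 n : 0 ≤ p n := (hp' n).le
  have hσ n : 0 ≤ σ n := (hσpos n).le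
  have hσc m : ∃ n, σ n ≠ m := (hσtop.eventually_ne_atTop m).exists
  refine ⟨?_, fun x y hy => ?_, ?_, ⟨summable_of_lt_top hp' hσ hσc h1 hθ₂,
    fun ⟨_, hD⟩ => lt_top_of_summable_fD hp' hσ h1 hθ₂ hD⟩,
    fun ⟨hc, hD⟩ x => ⟨?_, subd2_hMBe_eq hp0 hσ h1 h2 hc hD x⟩⟩
  · obtain ⟨y, hy⟩ := exists_lt (-α)
    refine lt_trans ?_ (coe_fD_div_fR_lt hp' hσ hσc h1 hθ₂ hy)
    rw [EReal.coe_lt_coe_iff, lt_div_iff₀ (fR_pos hp' (h1 hy))]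
    exact mul_fR_lt_fD hp' (fun n => (isLeast_sInf_range_of_tendsto hσtop).2 (mem_range_self n))
      (hσc _) (h1 hy) (summable_fD_of_lt hp0 hσ h1 hy)
  · rw [summable_mul_exp_add_iff, summable_mul_exp_add_iff, tsum_mul_exp_add, tsum_mul_exp_add]
    exact ⟨h1 hy, summable_fD_of_lt hp0 hσ h1 hy, hasFDerivAt_exp_mul_fR hp0 hσ h1 hy⟩
  · simp only [tsum_mul_exp_add]
    exact image_exp_mul_fR_fD hp' hσ hσtop h1 hθ₂
  · simp only [sub_eq_add_neg, ← mul_neg]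
    exact (hasSum_mul_exp_smul hc hD x).tendsto_sum_nat

theorem stmt16 (p σ : ℕ → ℝ) (hp : ∀ n, 1 ≤ p n) (hσpos : ∀ n, 0 < σ n)
    (hσtop : Tendsto σ atTop atTop) (hne : (fDom p σ).Nonempty)
    (α : ℝ) (hα : 0 ≤ α) (h1 : Set.Iio (-α) ⊆ fDom p σ) (h2 : fDom p σ ⊆ Set.Iic (-α))
    (θ₂ : EReal)
    (hθ₂ : Tendsto (fun y => ((fD p σ y / fR p σ y : ℝ) : EReal))
      (nhdsWithin (-α) (Set.Iio (-α))) (nhds θ₂)) :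
    ((sInf (Set.range σ) : ℝ) : EReal) < θ₂ ∧
    (∀ x y : ℝ, y < -α →
      (Summable fun n => p n * Real.exp (x + σ n * y)) ∧
      (Summable fun n => p n * σ n * Real.exp (x + σ n * y)) ∧
      HasFDerivAt (fun z : ℝ × ℝ => Real.exp z.1 * fR p σ z.2)
        (gradCLM (∑' n, p n * Real.exp (x + σ n * y))
          (∑' n, p n * σ n * Real.exp (x + σ n * y))) (x, y)) ∧
    ((fun z : ℝ × ℝ => ((∑' n, p n * Real.exp (z.1 + σ n * z.2)),
        (∑' n, p n * σ n * Real.exp (z.1 + σ n * z.2)))) '' (Set.univ ×ˢ Set.Iio (-α)) =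
      {w : ℝ × ℝ | 0 < w.1 ∧ sInf (Set.range σ) * w.1 < w.2 ∧
        ((w.2 : ℝ) : EReal) < θ₂ * ((w.1 : ℝ) : EReal)}) ∧
    (θ₂ < ⊤ ↔
      (-α ∈ fDom p σ ∧ Summable fun n => p n * σ n * Real.exp (σ n * (-α)))) ∧
    ((-α ∈ fDom p σ ∧ (Summable fun n => p n * σ n * Real.exp (σ n * (-α)))) →
      ∀ x : ℝ,
        Tendsto (fun N => ∑ k ∈ Finset.range N,
            (p k * Real.exp (x - σ k * α)) • ((1 : ℝ), σ k)) atTop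
          (nhds (Real.exp x * fR p σ (-α), Real.exp x * fD p σ (-α))) ∧
        subd2 (fun z => ((hMBe p σ z : ℝ≥0∞) : EReal)) (x, -α) =
          {Real.exp x * fR p σ (-α)} ×ˢ Set.Ici (Real.exp x * fD p σ (-α))) :=
  stmt16_general p σ hp hσpos hσtop α h1 h2 θ₂ hθ₂
end

section
/- Let (p_n)_{n≥1} ⊆ [1,∞) and (σ_n)_{n≥1} ⊆ ℝ be arbitrary sequences, and let H := H_MB be the Maxwell–Boltzmann value function. Then its Fenchel conjugate satisfies H*(x,y) = Σ_{n≥1} p_n e^{x+σ_n y} = e^x Σ_{n≥1} p_n e^{σ_n y} for every (x,y) ∈ ℝ² (both sides being elements of (0,+∞], the series taking the value +∞ when divergent). -/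
open Filter

open scoped ENNReal

lemma coe_sum_range (f : ℕ → ℝ) (N : ℕ) :
    ((∑ k ∈ Finset.range N, f k : ℝ) : EReal) = ∑ k ∈ Finset.range N, (f k : EReal) := by
  induction N with
  | zero => simp
  | succ n ih => rw [Finset.sum_range_succ, Finset.sum_range_succ, ← ih, EReal.coe_add]

lemma serSum_eq_of_tendsto {β : ℕ → EReal} {l : EReal}
    (h : Tendsto (fun N => ∑ k ∈ Finset.range N, β k) atTop (nhds l)) : serSum β = l := by
  have hex : ∃ l : EReal, Tendsto (fun N => ∑ k ∈ Finset.range N, β k) atTop (nhds l) := ⟨l, h⟩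
  rw [serSum, dif_pos hex]
  exact tendsto_nhds_unique hex.choose_spec h

lemma le_serSum {β : ℕ → EReal} {g : ℕ → EReal} {b : EReal}
    (hg : Tendsto g atTop (nhds b))
    (hle : ∀ N, g N ≤ ∑ k ∈ Finset.range N, β k) : b ≤ serSum β := by
  rw [serSum]
  split_ifs with hex
  · exact le_of_tendsto_of_tendsto hg hex.choose_spec (Filter.Eventually.of_forall hle)
  · exact le_top

lemma young (c s : ℝ) (hs : 0 ≤ s) : c * s - Real.exp c ≤ s * (Real.log s - 1) := by
  rcases hs.eq_or_lt with h | h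
  · rw [← h]; nlinarith [Real.exp_pos c]
  · have h1 : c - Real.log s + 1 ≤ Real.exp (c - Real.log s) := Real.add_one_le_exp _
    rw [Real.exp_sub, Real.exp_log h] at h1
    have h3 : (c - Real.log s + 1) * s ≤ Real.exp c := (le_div_iff₀ h).mp h1
    nlinarith

/-- For arbitrary `(p_n) ⊆ [1,∞)` and `(σ_n) ⊆ ℝ`, the Fenchel conjugate of the
Maxwell–Boltzmann value function `H = H_MB` is `H^*(x,y) = Σ_n p_n e^{x+σ_n y}
= e^x Σ_n p_n e^{σ_n y}` (an element of `(0,+∞]`, `+∞` when the series diverges). -/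
theorem stmt19 (p σ : ℕ → ℝ) (hp : ∀ n, 1 ≤ p n) :
    ∀ x y : ℝ,
      (⨆ z : ℝ × ℝ, (((x * z.1 + y * z.2 : ℝ) : EReal) - Hval p σ EMBe z.1 z.2)) =
        ((∑' n, ENNReal.ofReal (p n * Real.exp (x + σ n * y)) : ℝ≥0∞) : EReal) ∧
      ((∑' n, ENNReal.ofReal (p n * Real.exp (x + σ n * y)) : ℝ≥0∞) : EReal) =
        ((ENNReal.ofReal (Real.exp x) *
          ∑' n, ENNReal.ofReal (p n * Real.exp (σ n * y)) : ℝ≥0∞) : EReal) := by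
  intro x y
  have hp0 : ∀ n, (0:ℝ) < p n := fun n => lt_of_lt_of_le one_pos (hp n)
  set c : ℕ → ℝ := fun n => x + σ n * y with hc
  set a : ℕ → ℝ := fun n => p n * Real.exp (c n) with ha
  have ha0 : ∀ n, 0 ≤ a n := fun n => mul_nonneg (hp0 n).le (Real.exp_pos _).le
  constructor
  · -- main equality
    set T : ℝ≥0∞ := ∑' n, ENNReal.ofReal (a n) with hT
    show _ = (T : EReal)
    have hps : ∀ N, ((∑ k ∈ Finset.range N, ENNReal.ofReal (a k) : ℝ≥0∞) : EReal)
        = ((∑ k ∈ Finset.range N, a k : ℝ) : EReal) := by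
      intro N
      rw [← ENNReal.ofReal_sum_of_nonneg (fun i _ => ha0 i), EReal.coe_ennreal_ofReal,
        max_eq_left (Finset.sum_nonneg fun i _ => ha0 i)]
    apply le_antisymm
    · -- sup ≤ T
      apply iSup_le
      rintro ⟨u, v⟩
      rcases eq_or_ne T ⊤ with hTtop | hTtop
      · rw [hTtop, EReal.coe_ennreal_top]; exact le_top
      set Tr := T.toReal with hTrdef
      have hTr : ((Tr : ℝ) : EReal) = (T : EReal) := by
        rw [hTrdef, ← EReal.toReal_coe_ennreal]
        exact EReal.coe_toReal (by simpa using hTtop) (EReal.coe_ennreal_ne_bot T)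
      have hTb : ∀ N, ∑ k ∈ Finset.range N, a k ≤ Tr := by
        intro N
        have h1 : ∑ k ∈ Finset.range N, ENNReal.ofReal (a k) ≤ T := ENNReal.sum_le_tsum _
        rw [← ENNReal.ofReal_sum_of_nonneg (fun i _ => ha0 i)] at h1
        exact (ENNReal.ofReal_le_iff_le_toReal hTtop).mp h1
      have hH : ((x * u + y * v - Tr : ℝ) : EReal) ≤ Hval p σ EMBe u v := by
        apply le_sInf
        rintro _ ⟨w, ⟨hw0, hwu, hwv⟩, rfl⟩
        have hwp : ∀ n, 0 ≤ w n / p n := fun n => div_nonneg (hw0 n) (hp0 n).le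
        apply le_serSum (g := fun N => ((x * (∑ k ∈ Finset.range N, w k)
            + y * (∑ k ∈ Finset.range N, σ k * w k) - Tr : ℝ) : EReal))
        · rw [EReal.tendsto_coe]
          exact ((hwu.const_mul x).add (hwv.const_mul y)).sub tendsto_const_nhds
        · intro N
          have hsum : (∑ k ∈ Finset.range N, (p k : EReal) * EMBe (w k / p k))
              = ((∑ k ∈ Finset.range N, p k * ((w k / p k) * (Real.log (w k / p k) - 1)) : ℝ)
                : EReal) := by
            rw [coe_sum_range]
            refine Finset.sum_congr rfl fun k _ => ?_
            rw [EMBe, if_pos (hwp k), ← EReal.coe_mul]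
          rw [hsum, EReal.coe_le_coe_iff]
          have key : ∀ k, c k * w k - a k ≤ p k * ((w k / p k) * (Real.log (w k / p k) - 1)) := by
            intro k
            have h2 := mul_le_mul_of_nonneg_left (young (c k) (w k / p k) (hwp k)) (hp0 k).le
            have h4 : p k * (w k / p k) = w k := by
              rw [mul_comm]; exact div_mul_cancel₀ _ (hp0 k).ne'
            have h3 : p k * (c k * (w k / p k) - Real.exp (c k)) = c k * w k - a k := by
              simp only [ha]
              rw [mul_sub, mul_left_comm, h4]
            rw [h3] at h2; exact h2
          have s1 : ∑ k ∈ Finset.range N, (c k * w k - a k)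
              ≤ ∑ k ∈ Finset.range N, p k * ((w k / p k) * (Real.log (w k / p k) - 1)) :=
            Finset.sum_le_sum fun k _ => key k
          rw [Finset.sum_sub_distrib] at s1
          have s2 : ∑ k ∈ Finset.range N, c k * w k
              = x * (∑ k ∈ Finset.range N, w k) + y * (∑ k ∈ Finset.range N, σ k * w k) := by
            rw [Finset.mul_sum, Finset.mul_sum, ← Finset.sum_add_distrib]
            exact Finset.sum_congr rfl fun k _ => by rw [hc]; ring
          have := hTb N
          linarith
      calc ((x * u + y * v : ℝ) : EReal) - Hval p σ EMBe u v
          ≤ ((x * u + y * v : ℝ) : EReal) - ((x * u + y * v - Tr : ℝ) : EReal) :=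
            EReal.sub_le_sub le_rfl hH
        _ = ((x * u + y * v - (x * u + y * v - Tr) : ℝ) : EReal) := (EReal.coe_sub _ _).symm
        _ = ((Tr : ℝ) : EReal) := by norm_num
        _ = (T : EReal) := hTr
    · -- T ≤ sup
      have htend : Tendsto (fun N => ((∑ k ∈ Finset.range N, ENNReal.ofReal (a k) : ℝ≥0∞) : EReal))
          atTop (nhds (T : EReal)) :=
        EReal.tendsto_coe_ennreal.2 (ENNReal.tendsto_nat_tsum _)
      refine le_of_tendsto htend (Filter.Eventually.of_forall fun N => ?_)
      rw [hps N]
      set u := ∑ k ∈ Finset.range N, a k with hu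
      set v := ∑ k ∈ Finset.range N, σ k * a k with hv
      set A := ∑ k ∈ Finset.range N, p k * (Real.exp (c k) * (c k - 1)) with hA
      set w : ℕ → ℝ := fun n => if n < N then a n else 0 with hw
      have hwsum : ∀ (f : ℕ → ℝ), ∀ M, N ≤ M →
          ∑ k ∈ Finset.range M, (if k < N then f k else 0)
            = ∑ k ∈ Finset.range N, f k := by
        intro f M hM
        rw [← Finset.sum_subset (Finset.range_subset_range.2 hM)
          (fun k _ hk => if_neg (by simpa using hk))]
        exact Finset.sum_congr rfl fun k hk => if_pos (Finset.mem_range.1 hk)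
      have hwfeas : w ∈ Sfeas σ u v := by
        refine ⟨fun n => ?_, ?_, ?_⟩
        · rw [hw]; dsimp only; split
          · exact ha0 n
          · exact le_rfl
        · refine Tendsto.congr' ?_ (tendsto_const_nhds (x := u))
          filter_upwards [eventually_ge_atTop N] with M hM
          exact (hwsum a M hM).symm
        · refine Tendsto.congr' ?_ (tendsto_const_nhds (x := v))
          filter_upwards [eventually_ge_atTop N] with M hM
          have : ∀ k, σ k * w k = (if k < N then σ k * a k else 0) := by
            intro k; rw [hw]; dsimp only; split <;> simp
          simp_rw [this]
          exact (hwsum (fun k => σ k * a k) M hM).symm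
      have hserr : serSum (fun n => (p n : EReal) * EMBe (w n / p n)) = (A : EReal) := by
        have hβ : ∀ n, (p n : EReal) * EMBe (w n / p n)
            = (((if n < N then p n * (Real.exp (c n) * (c n - 1)) else 0 : ℝ)) : EReal) := by
          intro n
          by_cases hn : n < N
          · rw [if_pos hn]
            have hwn : w n / p n = Real.exp (c n) := by
              rw [hw]; dsimp only; rw [if_pos hn, ha]
              exact mul_div_cancel_left₀ _ (hp0 n).ne'
            rw [hwn, EMBe, if_pos (Real.exp_pos _).le, Real.log_exp, ← EReal.coe_mul]
          · rw [if_neg hn]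
            have hwn : w n / p n = 0 := by rw [hw]; dsimp only; rw [if_neg hn, zero_div]
            rw [hwn, EMBe, if_pos le_rfl]
            norm_num
        apply serSum_eq_of_tendsto
        refine Tendsto.congr' ?_ (tendsto_const_nhds (x := (A : EReal)))
        filter_upwards [eventually_ge_atTop N] with M hM
        simp_rw [hβ]
        rw [← coe_sum_range, hwsum _ M hM, hA]
      have hHle : Hval p σ EMBe u v ≤ (A : EReal) := by
        rw [← hserr]
        exact sInf_le ⟨w, hwfeas, rfl⟩
      have hreal : (∑ k ∈ Finset.range N, a k : ℝ) = x * u + y * v - A := by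
        rw [hu, hv, hA, Finset.mul_sum, Finset.mul_sum, ← Finset.sum_add_distrib,
          ← Finset.sum_sub_distrib]
        exact Finset.sum_congr rfl fun k _ => by rw [ha, hc]; ring
      calc ((∑ k ∈ Finset.range N, a k : ℝ) : EReal)
          = ((x * u + y * v - A : ℝ) : EReal) := by rw [hreal]
        _ = ((x * u + y * v : ℝ) : EReal) - ((A : ℝ) : EReal) := EReal.coe_sub _ _
        _ ≤ ((x * u + y * v : ℝ) : EReal) - Hval p σ EMBe u v := EReal.sub_le_sub le_rfl hHle
        _ ≤ ⨆ z : ℝ × ℝ, (((x * z.1 + y * z.2 : ℝ) : EReal) - Hval p σ EMBe z.1 z.2) :=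
            le_iSup (fun z : ℝ × ℝ => (((x * z.1 + y * z.2 : ℝ) : EReal)
              - Hval p σ EMBe z.1 z.2)) (u, v)
  · -- factorization
    rw [EReal.coe_ennreal_eq_coe_ennreal_iff, ← ENNReal.tsum_mul_left]
    refine tsum_congr fun n => ?_
    rw [← ENNReal.ofReal_mul (Real.exp_nonneg x)]
    congr 1
    rw [Real.exp_add]
    ring
end
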